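/- arXiv:2411.05606 — 10 statements merged into one kernel-verified Lean document; each statement's English description precedes it below -/
import Mathlib

section
/- Let Ω ⊆ ℝ^d be open and convex and f : Ω → ℝ convex. If ∇f is constant (with value v) on a subset B ⊆ Ω (at points of differentiability of f), then f is affine on the closed convex hull of B taken within Ω; that is, f(z) = f(y₀) + v·(z − y₀) for any fixed y₀ ∈ B and all z in the closed convex hull of B intersected with Ω. -/
open Set

/-- Subgradient inequality: a convex function lies above its tangent at a
point of differentiability. -/
lemma subgrad_ineq {E : Type*} [NormedAddCommGroup E] [InnerProductSpace ℝ E]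
    [CompleteSpace E]
    {Ω : Set E} (hΩconv : Convex ℝ Ω) {f : E → ℝ} (hf : ConvexOn ℝ Ω f)
    {v y : E} (hy : y ∈ Ω) (hg : HasGradientAt f v y)
    {x : E} (hx : x ∈ Ω) :
    f y + inner ℝ v (x - y) ≤ f x := by
  set φ : ℝ → ℝ := fun t => f (y + t • (x - y)) with hφ
  have hline : HasDerivAt (fun t : ℝ => y + t • (x - y)) (x - y) 0 := by
    simpa using ((hasDerivAt_id (0:ℝ)).smul_const (x - y)).const_add y
  have hD : HasDerivAt φ (inner ℝ v (x - y)) 0 := by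
    have hf' : HasFDerivAt f ((InnerProductSpace.toDual ℝ E) v)
        (y + (0:ℝ) • (x - y)) := by simpa using hg.hasFDerivAt
    have := hf'.comp_hasDerivAt 0 hline
    exact (by simpa using this :
      HasDerivAt (f ∘ fun t : ℝ => y + t • (x - y)) (inner ℝ v (x - y)) 0)
  have hslope : Filter.Tendsto (slope φ 0) (nhdsWithin 0 (Set.Ioi (0:ℝ)))
      (nhds (inner ℝ v (x - y))) := by
    refine (hasDerivAt_iff_tendsto_slope.mp hD).mono_left
      (nhdsWithin_mono _ (fun t ht => ?_))
    simp only [Set.mem_compl_iff, Set.mem_singleton_iff]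
    exact ne_of_gt ht
  have key : inner ℝ v (x - y) ≤ f x - f y := by
    refine le_of_tendsto hslope ?_
    filter_upwards [Ioc_mem_nhdsGT_of_mem (by constructor <;> norm_num :
      (0:ℝ) ∈ Set.Ico (0:ℝ) 1)] with t ht
    have ht0' : (0:ℝ) < t := ht.1
    have ht1' : t ≤ 1 := ht.2
    have hmem : y + t • (x - y) ∈ Ω := by
      have h := hΩconv hy hx (by linarith : (0:ℝ) ≤ 1 - t) (le_of_lt ht0')
        (by ring)
      have : (1 - t) • y + t • x = y + t • (x - y) := by
        simp [smul_sub, sub_smul]; abel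
      rwa [this] at h
    have hconv : φ t ≤ (1 - t) * f y + t * f x := by
      have h := hf.2 hy hx (by linarith : (0:ℝ) ≤ 1 - t) (le_of_lt ht0')
        (by ring)
      have he : (1 - t) • y + t • x = y + t • (x - y) := by
        simp [smul_sub, sub_smul]; abel
      simpa [hφ, he, smul_eq_mul] using h
    have : slope φ 0 t = (φ t - φ 0) / t := by
      simp [slope, div_eq_inv_mul]
    rw [this]
    rw [div_le_iff₀ ht0']
    have hφ0 : φ 0 = f y := by simp [hφ]
    rw [hφ0]
    nlinarith [hconv]
  linarith [key]

/-- If `Ω ⊆ ℝ^d` is open and convex, `f : Ω → ℝ` is convex,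
and `f` is differentiable with constant gradient `v` on a subset `B ⊆ Ω`, then
`f` is affine on the closed convex hull of `B` intersected with `Ω`:
`f(z) = f(y₀) + v·(z − y₀)` for any `y₀ ∈ B` and all such `z`. -/
theorem stmt2 {d : ℕ} {Ω : Set (EuclideanSpace ℝ (Fin d))}
    (hΩopen : IsOpen Ω) (hΩconv : Convex ℝ Ω)
    {f : EuclideanSpace ℝ (Fin d) → ℝ} (hf : ConvexOn ℝ Ω f)
    {B : Set (EuclideanSpace ℝ (Fin d))} (hB : B ⊆ Ω)
    {v : EuclideanSpace ℝ (Fin d)} (hgrad : ∀ y ∈ B, HasGradientAt f v y)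
    {y₀ : EuclideanSpace ℝ (Fin d)} (hy₀ : y₀ ∈ B) :
    ∀ z ∈ closure (convexHull ℝ B) ∩ Ω,
      f z = f y₀ + inner ℝ v (z - y₀) := by
  intro z hz
  obtain ⟨hzc, hzΩ⟩ := hz
  set g : EuclideanSpace ℝ (Fin d) → ℝ :=
    fun x => f x - f y₀ - inner ℝ v (x - y₀) with hg
  -- g is nonnegative on Ω
  have hnonneg : ∀ x ∈ Ω, 0 ≤ g x := fun x hx => by
    have := subgrad_ineq hΩconv hf (hB hy₀) (hgrad y₀ hy₀) hx
    simp only [hg]; linarith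
  -- g vanishes on B
  have hzero : ∀ y ∈ B, g y = 0 := by
    intro y hy
    have h1 := subgrad_ineq hΩconv hf (hB hy) (hgrad y hy) (hB hy₀)
    have h2 := hnonneg y (hB hy)
    have hinner : (inner ℝ v (y₀ - y) : ℝ) = - inner ℝ v (y - y₀) := by
      rw [← inner_neg_right]; congr 1; abel
    simp only [hg] at h2 ⊢
    rw [hinner] at h1
    linarith
  -- g is convex on Ω
  have hgconv : ConvexOn ℝ Ω g := by
    constructor
    · exact hΩconv
    · intro p hp q hq a b ha hb hab
      have hfine := hf.2 hp hq ha hb hab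
      simp only [hg, smul_eq_mul]
      have : (inner ℝ v ((a • p + b • q) - y₀) : ℝ)
          = a * inner ℝ v (p - y₀) + b * inner ℝ v (q - y₀) := by
        have : (a • p + b • q) - y₀ = a • (p - y₀) + b • (q - y₀) := by
          have h1 : a • y₀ + b • y₀ = y₀ := by rw [← add_smul, hab, one_smul]
          rw [smul_sub, smul_sub]; conv_lhs => rw [← h1]
          abel
        rw [this, inner_add_right, inner_smul_right, inner_smul_right]
      rw [this]
      simp only [smul_eq_mul] at hfine
      have hy' : a * f y₀ + b * f y₀ = f y₀ := by rw [← add_mul, hab, one_mul]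
      linarith [hfine, hy']
  -- hence g ≤ 0 on convexHull B
  have hhull : ∀ x ∈ convexHull ℝ B, g x ≤ 0 := by
    intro x hx
    have hsub : convexHull ℝ B ⊆ {x ∈ Ω | g x ≤ 0} := by
      apply convexHull_min
      · intro y hy
        exact ⟨hB hy, le_of_eq (hzero y hy)⟩
      · exact hgconv.convex_le 0
    exact (hsub hx).2
  -- g is continuous on Ω
  have hcont : ContinuousOn g Ω := by
    have hfc : ContinuousOn f Ω := hf.continuousOn hΩopen
    have : Continuous fun x : EuclideanSpace ℝ (Fin d) =>
        (inner ℝ v (x - y₀) : ℝ) :=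
      (continuous_const.inner (continuous_id.sub continuous_const))
    exact (hfc.sub continuousOn_const).sub this.continuousOn
  -- g z ≤ 0 by continuity
  have hle : g z ≤ 0 := by
    have hca : ContinuousWithinAt g (convexHull ℝ B) z :=
      ((hcont.continuousAt (hΩopen.mem_nhds hzΩ)).continuousWithinAt)
    have hmem := hca.mem_closure_image hzc
    have himg : g '' (convexHull ℝ B) ⊆ Set.Iic 0 := by
      rintro _ ⟨x, hx, rfl⟩; exact hhull x hx
    have := closure_mono himg hmem
    rwa [closure_Iic] at this
  have hge := hnonneg z hzΩ
  have : g z = 0 := le_antisymm hle hge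
  simp only [hg] at this
  linarith
end

section
/- Let 𝒞 ⊆ [0,1] be the standard Cantor set, c the Cantor function, and for t > 0 set 𝒞_t = {z + t·c(z) : z ∈ 𝒞}. Then 𝒞_t is a closed, nowhere dense subset of [0, 1+t] with Lebesgue measure λ(𝒞_t) = t. -/
open Set MeasureTheory

/-- The standard Cantor (devil's staircase) function on `[0,1]`. -/
structure IsCantorFunction (c : ℝ → ℝ) : Prop where
  continuousOn : ContinuousOn c (Icc 0 1)
  monotoneOn : MonotoneOn c (Icc 0 1)
  map_zero : c 0 = 0
  map_one : c 1 = 1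
  locallyConstant : ∀ x ∈ Icc (0:ℝ) 1 \ cantorSet,
    ∃ U ∈ nhds x, ∀ y ∈ U ∩ Icc (0:ℝ) 1, c y = c x


lemma one_mem_preCantorSet' (n : ℕ) : (1:ℝ) ∈ preCantorSet n := by
  induction n with
  | zero => simp [preCantorSet]
  | succ n ih => exact Or.inr ⟨1, ih, by norm_num⟩

lemma one_mem_cantorSet' : (1:ℝ) ∈ cantorSet := Set.mem_iInter.mpr one_mem_preCantorSet'

lemma volume_preCantorSet_le (n : ℕ) : volume (preCantorSet n) ≤ (2/3 : ENNReal) ^ n := by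
  induction n with
  | zero => simp [preCantorSet]
  | succ n ih =>
    rw [preCantorSet_succ]
    have h1 : ((· / 3) '' preCantorSet n) = (fun x : ℝ => (3:ℝ) * x) ⁻¹' preCantorSet n := by
      ext x
      constructor
      · rintro ⟨y, hy, rfl⟩; simpa [mul_div_cancel₀] using hy
      · intro h; exact ⟨3 * x, h, by ring⟩
    have h2 : ((fun x : ℝ => (2 + x) / 3) '' preCantorSet n)
        = (fun x : ℝ => (3:ℝ) * x) ⁻¹' ((fun x : ℝ => (-2 : ℝ) + x) ⁻¹' preCantorSet n) := by
      ext x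
      constructor
      · rintro ⟨y, hy, rfl⟩
        simp only [mem_preimage]
        have : (-2 : ℝ) + 3 * ((2 + y) / 3) = y := by ring
        rwa [this]
      · intro h
        exact ⟨(-2 : ℝ) + 3 * x, h, by ring⟩
    have key : ∀ s : Set ℝ, volume ((fun x : ℝ => (3:ℝ) * x) ⁻¹' s) = (3:ENNReal)⁻¹ * volume s := by
      intro s
      rw [Real.volume_preimage_mul_left (by norm_num : (3:ℝ) ≠ 0) s]
      rw [abs_of_pos (by norm_num : (0:ℝ) < (3:ℝ)⁻¹), ENNReal.ofReal_inv_of_pos (by norm_num)]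
      norm_num
    have htrans : volume ((fun x : ℝ => (-2 : ℝ) + x) ⁻¹' preCantorSet n) = volume (preCantorSet n) :=
      measure_preimage_add volume (-2 : ℝ) (preCantorSet n)
    calc volume _ ≤ volume ((· / 3) '' preCantorSet n)
          + volume ((fun x : ℝ => (2 + x) / 3) '' preCantorSet n) := measure_union_le _ _
      _ = (3:ENNReal)⁻¹ * volume (preCantorSet n) + (3:ENNReal)⁻¹ * volume (preCantorSet n) := by
          rw [h1, h2, key, key, htrans]
      _ = (2/3 : ENNReal) * volume (preCantorSet n) := by
          rw [← two_mul, ENNReal.div_eq_inv_mul]; ring_nf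
      _ ≤ (2/3 : ENNReal) * (2/3 : ENNReal) ^ n := mul_le_mul_right ih _
      _ = (2/3 : ENNReal) ^ (n+1) := (pow_succ' _ _).symm

lemma volume_cantorSet' : volume cantorSet = 0 := by
  have hb : ∀ n, volume cantorSet ≤ (2/3 : ENNReal) ^ n := fun n =>
    (measure_mono (Set.iInter_subset _ n)).trans (volume_preCantorSet_le n)
  have hlt : (2/3 : ENNReal) < 1 := by
    rw [ENNReal.div_lt_iff (by norm_num) (by norm_num)]; norm_num
  have htend := ENNReal.tendsto_pow_atTop_nhds_zero_of_lt_one hlt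
  have := le_of_tendsto_of_tendsto'
    (tendsto_const_nhds : Filter.Tendsto (fun _ : ℕ => volume cantorSet) Filter.atTop _)
    htend hb
  simpa using this


lemma volume_image_of_locally_translate {f : ℝ → ℝ} {S : Set ℝ}
    (hinj : InjOn f S)
    (hloc : ∀ x ∈ S, ∃ V, IsOpen V ∧ x ∈ V ∧ V ⊆ S ∧ ∀ y ∈ V, f y = y + (f x - x)) :
    volume (f '' S) = volume S := by
  classical
  set W : ℝ → Set ℝ := fun x => if h : x ∈ S then (hloc x h).choose else ∅ with hW
  have hWopen : ∀ x, IsOpen (W x) := by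
    intro x; by_cases h : x ∈ S
    · simp only [hW, dif_pos h]; exact (hloc x h).choose_spec.1
    · simp [hW, dif_neg h]
  have hWmem : ∀ x ∈ S, x ∈ W x := by
    intro x h; simp only [hW, dif_pos h]; exact (hloc x h).choose_spec.2.1
  have hWsub : ∀ x ∈ S, W x ⊆ S := by
    intro x h; simp only [hW, dif_pos h]; exact (hloc x h).choose_spec.2.2.1
  have hWtr : ∀ x ∈ S, ∀ y ∈ W x, f y = y + (f x - x) := by
    intro x h; simp only [hW, dif_pos h]; exact (hloc x h).choose_spec.2.2.2
  obtain ⟨T, hTS, hTct, hcov⟩ := TopologicalSpace.countable_cover_nhdsWithin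
    (f := W) (s := S) (fun x hx => mem_nhdsWithin_of_mem_nhds ((hWopen x).mem_nhds (hWmem x hx)))
  rcases T.eq_empty_or_nonempty with hT | hT
  · have : S = ∅ := by
      apply eq_empty_of_subset_empty; intro x hx
      have := hcov hx; simp [hT] at this
    simp [this]
  obtain ⟨e, he⟩ := hTct.exists_eq_range hT
  have heS : ∀ n, e n ∈ S := fun n => hTS (he ▸ mem_range_self n)
  set A : ℕ → Set ℝ := fun n => W (e n) with hA
  have hSA : S = ⋃ n, A n := by
    apply Subset.antisymm
    · intro x hx
      have := hcov hx
      rw [he] at this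
      simpa [hA] using this
    · exact iUnion_subset fun n => hWsub (e n) (heS n)
  set B : ℕ → Set ℝ := disjointed A with hB
  have hBmeas : ∀ n, MeasurableSet (B n) :=
    MeasurableSet.disjointed fun n => (hWopen (e n)).measurableSet
  have hBA : ∀ n, B n ⊆ A n := disjointed_subset A
  have hBS : ∀ n, B n ⊆ S := fun n => (hBA n).trans (hWsub (e n) (heS n))
  have hUB : ⋃ n, B n = S := by rw [hB, iUnion_disjointed, ← hSA]
  set k : ℕ → ℝ := fun n => f (e n) - e n with hk
  have himg : ∀ n, f '' B n = (fun y : ℝ => (-(k n)) + y) ⁻¹' B n := by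
    intro n
    ext y
    simp only [mem_image, mem_preimage]
    constructor
    · rintro ⟨b, hb, rfl⟩
      have hfb : f b = b + k n := hWtr (e n) (heS n) b (hBA n hb)
      rw [hfb]
      have : -(k n) + (b + k n) = b := by ring
      rwa [this]
    · intro h
      refine ⟨-(k n) + y, h, ?_⟩
      rw [hWtr (e n) (heS n) _ (hBA n h)]
      ring
  have hvol : ∀ n, volume (f '' B n) = volume (B n) := by
    intro n; rw [himg n]; exact measure_preimage_add volume (-(k n)) (B n)
  have hfmeas : ∀ n, MeasurableSet (f '' B n) := by
    intro n; rw [himg n]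
    exact (hBmeas n).preimage (measurable_const_add _)
  have hfdisj : Pairwise (Function.onFun Disjoint fun n => f '' B n) := by
    intro m n hmn
    exact (disjoint_disjointed A hmn).image hinj (hBS m) (hBS n)
  have hfS : f '' S = ⋃ n, f '' B n := by rw [← hUB, image_iUnion]
  rw [hfS, measure_iUnion hfdisj hfmeas]
  have := measure_iUnion (μ := volume) (disjoint_disjointed A) hBmeas
  rw [hUB] at this
  rw [this]
  exact tsum_congr hvol

/-- For `t > 0`, the image `𝒞_t = {z + t·c(z) : z ∈ 𝒞}` of the
standard Cantor set under `X_t` is a closed, nowhere dense subset of `[0, 1+t]`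
of Lebesgue measure `t`. -/
theorem stmt5 {c : ℝ → ℝ} (hc : IsCantorFunction c) {t : ℝ} (ht : 0 < t) :
    IsClosed ((fun z => z + t * c z) '' cantorSet) ∧
      IsNowhereDense ((fun z => z + t * c z) '' cantorSet) ∧
      (fun z => z + t * c z) '' cantorSet ⊆ Icc (0:ℝ) (1 + t) ∧
      volume ((fun z => z + t * c z) '' cantorSet) = ENNReal.ofReal t := by
  set f : ℝ → ℝ := fun z => z + t * c z with hf
  have hmono : StrictMonoOn f (Icc 0 1) := by
    intro x hx y hy hxy
    have hcc : c x ≤ c y := hc.monotoneOn hx hy hxy.le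
    have : t * c x ≤ t * c y := mul_le_mul_of_nonneg_left hcc ht.le
    simpa [hf] using add_lt_add_of_lt_of_le hxy this
  have hinj : InjOn f (Icc 0 1) := hmono.injOn
  have hcont : ContinuousOn f (Icc 0 1) :=
    continuousOn_id.add (continuousOn_const.mul hc.continuousOn)
  have h01 : (0:ℝ) ∈ Icc (0:ℝ) 1 := by norm_num
  have h11 : (1:ℝ) ∈ Icc (0:ℝ) 1 := by norm_num
  have hf0 : f 0 = 0 := by simp [hf, hc.map_zero]
  have hf1 : f 1 = 1 + t := by simp [hf, hc.map_one]
  have himage : f '' Icc 0 1 = Icc 0 (1 + t) := by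
    apply Subset.antisymm
    · rintro _ ⟨z, hz, rfl⟩
      constructor
      · have := hmono.monotoneOn h01 hz hz.1
        rwa [hf0] at this
      · have := hmono.monotoneOn hz h11 hz.2
        rwa [hf1] at this
    · have := intermediate_value_Icc (by norm_num : (0:ℝ) ≤ 1) hcont
      rwa [hf0, hf1] at this
  have hsub : f '' cantorSet ⊆ Icc 0 (1 + t) :=
    himage ▸ image_mono (f := f) cantorSet_subset_unitInterval
  have hclosed : IsClosed (f '' cantorSet) :=
    (isCompact_cantorSet.image_of_continuousOn
      (hcont.mono cantorSet_subset_unitInterval)).isClosed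
  -- the open complement within (0,1)
  set S : Set ℝ := Ioo 0 1 \ cantorSet with hS
  have hSIcc : Icc 0 1 \ cantorSet = S := by
    ext x
    simp only [hS, mem_diff, mem_Icc, mem_Ioo]
    constructor
    · rintro ⟨⟨h0, h1⟩, hC⟩
      refine ⟨⟨h0.lt_of_ne ?_, h1.lt_of_ne ?_⟩, hC⟩
      · rintro rfl; exact hC zero_mem_cantorSet
      · rintro rfl; exact hC one_mem_cantorSet'
    · rintro ⟨⟨h0, h1⟩, hC⟩; exact ⟨⟨h0.le, h1.le⟩, hC⟩
  have hSsub : S ⊆ Icc 0 1 := fun x hx => Ioo_subset_Icc_self hx.1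
  have hvolS : volume S = 1 := by
    rw [hS, measure_diff_null volume_cantorSet', Real.volume_Ioo]
    norm_num
  have hloc : ∀ x ∈ S, ∃ V, IsOpen V ∧ x ∈ V ∧ V ⊆ S ∧ ∀ y ∈ V, f y = y + (f x - x) := by
    intro x hx
    have hx' : x ∈ Icc (0:ℝ) 1 \ cantorSet := ⟨hSsub hx, hx.2⟩
    obtain ⟨U, hU, hUc⟩ := hc.locallyConstant x hx'
    refine ⟨interior U ∩ S, (isOpen_interior.inter (isOpen_Ioo.sdiff isClosed_cantorSet)), 
      ⟨mem_interior_iff_mem_nhds.2 hU, hx⟩, inter_subset_right, ?_⟩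
    intro y hy
    have hcy : c y = c x := hUc y ⟨interior_subset hy.1, hSsub hy.2⟩
    simp only [hf, hcy]; ring
  have hvol_fS : volume (f '' S) = 1 := by
    rw [volume_image_of_locally_translate (hinj.mono hSsub) hloc, hvolS]
  have hdisjCS : Disjoint cantorSet S := disjoint_sdiff_right
  have hdisj : Disjoint (f '' cantorSet) (f '' S) :=
    hdisjCS.image hinj cantorSet_subset_unitInterval hSsub
  have hunion : f '' cantorSet ∪ f '' S = Icc 0 (1 + t) := by
    rw [← image_union, ← hSIcc, union_diff_cancel cantorSet_subset_unitInterval, himage]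
  have hmeasC : MeasurableSet (f '' cantorSet) := hclosed.measurableSet
  have hmeasS : MeasurableSet (f '' S) := by
    have : f '' S = Icc 0 (1 + t) \ f '' cantorSet := by
      rw [← hunion, union_diff_cancel_left (disjoint_iff_inter_eq_empty.1 hdisj).subset]
    rw [this]
    exact measurableSet_Icc.diff hmeasC
  have hvol_eq : volume (f '' cantorSet) + 1 = ENNReal.ofReal (1 + t) := by
    rw [← hvol_fS, ← measure_union hdisj hmeasS, hunion, Real.volume_Icc]
    norm_num
  have hvolC : volume (f '' cantorSet) = ENNReal.ofReal t := by
    have h1 : ENNReal.ofReal (1 + t) = ENNReal.ofReal t + 1 := by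
      rw [add_comm (1:ℝ) t, ENNReal.ofReal_add ht.le zero_le_one, ENNReal.ofReal_one]
    rw [h1] at hvol_eq
    exact (ENNReal.add_left_inj (by norm_num)).1 hvol_eq
  -- nowhere dense
  have hint : interior (f '' cantorSet) = ∅ := by
    by_contra h
    obtain ⟨x, hx⟩ := nonempty_iff_ne_empty.2 h
    have hxC : x ∈ f '' cantorSet := interior_subset hx
    obtain ⟨z, hzC, hfz⟩ := hxC
    have hzI : z ∈ Icc (0:ℝ) 1 := cantorSet_subset_unitInterval hzC
    obtain ⟨u, hu, huEq⟩ := continuousOn_iff'.1 hcont (interior (f '' cantorSet)) isOpen_interior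
    have hzu : z ∈ u ∩ Icc 0 1 := by
      rw [← huEq]; exact ⟨by rwa [mem_preimage, hfz], hzI⟩
    have husub : u ∩ Icc 0 1 ⊆ cantorSet := by
      intro w hw
      have hwpre : w ∈ f ⁻¹' interior (f '' cantorSet) ∩ Icc 0 1 := by rw [huEq]; exact hw
      have : f w ∈ f '' cantorSet := interior_subset hwpre.1
      obtain ⟨w', hw'C, hw'⟩ := this
      have := hinj (cantorSet_subset_unitInterval hw'C) hwpre.2 hw'
      rwa [← this]
    obtain ⟨ε, hε, hball⟩ := Metric.isOpen_iff.1 hu z hzu.1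
    set A := max 0 (z - ε) with hA
    set B := min 1 (z + ε) with hB
    have hzI' := hzu.2
    have hAB : A < B := by
      rw [hA, hB, max_lt_iff, lt_min_iff, lt_min_iff]
      constructor
      · constructor <;> [norm_num; linarith [hzI'.1]]
      · constructor <;> linarith [hzI'.2]
    have hIoo : Ioo A B ⊆ u ∩ Icc 0 1 := by
      intro y hy
      constructor
      · apply hball
        rw [Metric.mem_ball, Real.dist_eq, abs_lt]
        constructor
        · have : z - ε ≤ A := le_max_right _ _
          linarith [hy.1]
        · have : B ≤ z + ε := min_le_right _ _
          linarith [hy.2]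
      · constructor
        · have : (0:ℝ) ≤ A := le_max_left _ _
          linarith [hy.1]
        · have : B ≤ 1 := min_le_left _ _
          linarith [hy.2]
    have h0 : volume (Ioo A B) ≤ 0 := by
      calc volume (Ioo A B) ≤ volume cantorSet := measure_mono (hIoo.trans husub)
        _ = 0 := volume_cantorSet'
    rw [Real.volume_Ioo] at h0
    have := ENNReal.ofReal_pos.2 (sub_pos.2 hAB)
    exact absurd (le_antisymm h0 zero_le) (ne_of_gt this)
  exact ⟨hclosed, by rw [IsNowhereDense, hclosed.closure_eq, hint], hsub, hvolC⟩
end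

section
/- Let c be the Cantor function extended by c(z) = 0 for z ≤ 0 and c(z) = 1 for z ≥ 1. Fix t > 0 and define f(x, t) = c(z) where x = z + t·c(z). Then f(·, t) satisfies the one-sided Lipschitz bound 0 ≤ (f(x̂, t) − f(x, t))/(x̂ − x) ≤ 1/t for all x̂ > x. -/
open Set

/-- The Cantor function extended to all of `ℝ` by `0` on `(-∞,0]` and `1` on
`[1,∞)`: continuous, monotone, and locally constant off the Cantor set. -/
structure IsExtendedCantorFunction (c : ℝ → ℝ) : Prop where
  continuous : Continuous c
  monotone : Monotone c
  eq_zero : ∀ z ≤ (0:ℝ), c z = 0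
  eq_one : ∀ z, (1:ℝ) ≤ z → c z = 1
  locallyConstant : ∀ x ∈ Icc (0:ℝ) 1 \ cantorSet,
    ∃ U ∈ nhds x, ∀ y ∈ U, c y = c x

/-- For `t > 0` the transported velocity
`f(x,t) = c(z)` where `x = z + t·c(z)` satisfies the one-sided Lipschitz
(Oleinik) bound `0 ≤ (f(x̂,t) − f(x,t))/(x̂ − x) ≤ 1/t` for `x̂ > x`:
writing `x = z + t c(z)` and `x̂ = ẑ + t c(ẑ)`, whenever `x̂ > x` one has
`0 ≤ (c(ẑ) − c(z))/(x̂ − x) ≤ 1/t`. -/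
theorem stmt6 {c : ℝ → ℝ} (hc : IsExtendedCantorFunction c) {t : ℝ} (ht : 0 < t)
    (z zhat : ℝ) (h : z + t * c z < zhat + t * c zhat) :
    0 ≤ (c zhat - c z) / ((zhat + t * c zhat) - (z + t * c z)) ∧
      (c zhat - c z) / ((zhat + t * c zhat) - (z + t * c z)) ≤ 1 / t := by
  have hz : z < zhat := by
    by_contra hzz
    push_neg at hzz
    have := hc.monotone hzz
    nlinarith
  have hcle : c z ≤ c zhat := hc.monotone hz.le
  have hD : 0 < (zhat + t * c zhat) - (z + t * c z) := by linarith
  constructor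
  · exact div_nonneg (by linarith) hD.le
  · rw [div_le_div_iff₀ hD ht]
    nlinarith
end

section
/- Let Ω ⊆ ℝ be a bounded open interval and φ : Ω → ℝ be convex and locally affine a.e. (affine on a neighborhood of a.e. point), with φ′ taking distinct values {v_i} on the components of the open full-measure set A where φ is locally affine. Then φ is C¹ on Ω if and only if the set {v_i} is dense in an interval of ℝ. -/
open Set

/-- Let `Ω = (a,b)` be a bounded open interval, `φ` convex on `Ω`
and affine on a neighborhood of a.e. point, and let `A ⊆ Ω` be the open
full-measure set where `φ` is locally affine (on whose components `φ′` takes the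
distinct values `{vᵢ}`).  Then `φ` is `C¹` on `Ω` if and only if the set of
slopes `deriv φ '' A = {vᵢ}` is dense in an interval. -/
theorem stmt8 {a b : ℝ} (hab : a < b) {φ : ℝ → ℝ}
    (hconv : ConvexOn ℝ (Ioo a b) φ)
    (A : Set ℝ)
    (hA : A = {x ∈ Ioo a b | ∃ v h : ℝ, ∀ᶠ y in nhds x, φ y = v * y + h})
    (hfull : MeasureTheory.volume (Ioo a b \ A) = 0) :
    ContDiffOn ℝ 1 φ (Ioo a b) ↔
      ∃ I : Set ℝ, I.OrdConnected ∧ I.Nonempty ∧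
        deriv φ '' A ⊆ I ∧ I ⊆ closure (deriv φ '' A) := by
  have hAsub : A ⊆ Ioo a b := by rw [hA]; exact fun x hx => hx.1
  -- every open set meeting `Ioo a b` meets `A`
  have hP : ∀ s : Set ℝ, IsOpen s → (s ∩ Ioo a b).Nonempty → (s ∩ A).Nonempty := by
    intro s hs hne
    by_contra hcon
    rw [not_nonempty_iff_eq_empty] at hcon
    have hsub2 : s ∩ Ioo a b ⊆ Ioo a b \ A := fun x hx =>
      ⟨hx.2, fun hxA => (eq_empty_iff_forall_notMem.1 hcon x) ⟨hx.1, hxA⟩⟩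
    have h1 : MeasureTheory.volume (s ∩ Ioo a b) = 0 :=
      le_antisymm (le_trans (MeasureTheory.measure_mono hsub2) (le_of_eq hfull)) zero_le
    exact (hs.inter isOpen_Ioo).measure_ne_zero MeasureTheory.volume hne h1
  have hcl : Ioo a b ⊆ closure A := fun z hz =>
    mem_closure_iff.2 fun o ho hzo => hP o ho ⟨z, hzo, hz⟩
  -- derivative from local affinity
  have hder0 : ∀ (v h x : ℝ), (∀ᶠ y in nhds x, φ y = v * y + h) → deriv φ x = v := by
    intro v h x hev
    have h1 : HasDerivAt (fun z : ℝ => v * z + h) v x := by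
      simpa using ((hasDerivAt_id x).const_mul v).add_const h
    rw [Filter.EventuallyEq.deriv_eq hev, h1.deriv]
  -- local affine slope data
  have hptA : ∀ y ∈ A, ∃ v : ℝ, deriv φ y = v ∧
      (∃ p ∈ Ioo a y, (φ p - φ y) / (p - y) = v) ∧
      (∃ q ∈ Ioo y b, (φ q - φ y) / (q - y) = v) := by
    intro y hy
    rw [hA] at hy
    obtain ⟨hyI, v, h, hev⟩ := hy
    obtain ⟨ε, hε, hball⟩ := Metric.eventually_nhds_iff.1 hev
    have hφy : φ y = v * y + h := hball (by simpa using hε)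
    refine ⟨v, hder0 v h y hev, ?_, ?_⟩
    · refine ⟨y - min (ε / 2) ((y - a) / 2), ?_, ?_⟩
      · constructor
        · have h1 : min (ε / 2) ((y - a) / 2) ≤ (y - a) / 2 := min_le_right _ _
          have := hyI.1
          linarith
        · have h0 : 0 < min (ε / 2) ((y - a) / 2) :=
            lt_min (by linarith) (by linarith [hyI.1])
          linarith
      · have h0 : 0 < min (ε / 2) ((y - a) / 2) :=
          lt_min (by linarith) (by linarith [hyI.1])
        have hd : dist (y - min (ε / 2) ((y - a) / 2)) y < ε := by
          rw [Real.dist_eq]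
          have h1 : min (ε / 2) ((y - a) / 2) ≤ ε / 2 := min_le_left _ _
          rw [abs_of_nonpos (by linarith)]
          linarith
        have hφp : φ (y - min (ε / 2) ((y - a) / 2)) =
            v * (y - min (ε / 2) ((y - a) / 2)) + h := hball hd
        rw [hφp, hφy]
        have hne : y - min (ε / 2) ((y - a) / 2) - y ≠ 0 := by
          intro hc; rw [sub_sub_cancel_left] at hc
          exact (ne_of_gt h0) (by linarith [neg_eq_zero.1 hc])
        rw [div_eq_iff hne]
        ring
    · refine ⟨y + min (ε / 2) ((b - y) / 2), ?_, ?_⟩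
      · constructor
        · have h0 : 0 < min (ε / 2) ((b - y) / 2) :=
            lt_min (by linarith) (by linarith [hyI.2])
          linarith [hyI.1]
        · have h1 : min (ε / 2) ((b - y) / 2) ≤ (b - y) / 2 := min_le_right _ _
          have := hyI.2
          linarith
      · have h0 : 0 < min (ε / 2) ((b - y) / 2) :=
          lt_min (by linarith) (by linarith [hyI.2])
        have hd : dist (y + min (ε / 2) ((b - y) / 2)) y < ε := by
          rw [Real.dist_eq]
          have h1 : min (ε / 2) ((b - y) / 2) ≤ ε / 2 := min_le_left _ _
          rw [abs_of_nonneg (by linarith)]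
          linarith
        have hφq : φ (y + min (ε / 2) ((b - y) / 2)) =
            v * (y + min (ε / 2) ((b - y) / 2)) + h := hball hd
        rw [hφq, hφy]
        have hne : y + min (ε / 2) ((b - y) / 2) - y ≠ 0 := by
          intro hc; rw [add_sub_cancel_left] at hc
          exact (ne_of_gt h0) hc
        rw [div_eq_iff hne]
        ring
  -- slope bounds at points of A
  have haff : ∀ y ∈ A, ∀ x ∈ Ioo a b,
      (y < x → deriv φ y ≤ (φ x - φ y) / (x - y)) ∧
      (x < y → (φ x - φ y) / (x - y) ≤ deriv φ y) := by
    intro y hy x hx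
    obtain ⟨v, hdv, ⟨p, hp, hgp⟩, ⟨q, hq, hgq⟩⟩ := hptA y hy
    have hyI : y ∈ Ioo a b := hAsub hy
    constructor
    · intro hyx
      rw [hdv, ← hgp]
      exact hconv.secant_mono hyI ⟨hp.1, hp.2.trans hyI.2⟩ hx (ne_of_lt hp.2)
        (ne_of_gt hyx) (le_of_lt (hp.2.trans hyx))
    · intro hxy
      rw [hdv, ← hgq]
      exact hconv.secant_mono hyI hx ⟨hyI.1.trans hq.1, hq.2⟩ (ne_of_lt hxy)
        (ne_of_gt hq.1) (le_of_lt (hxy.trans hq.1))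
  constructor
  · -- forward direction
    intro hC1
    have hcd : ContinuousOn (deriv φ) (Ioo a b) :=
      hC1.continuousOn_deriv_of_isOpen isOpen_Ioo le_rfl
    have hclo : ∀ z ∈ Ioo a b, deriv φ z ∈ closure (deriv φ '' A) := fun z hz =>
      ((hcd z hz).mono hAsub).mem_closure_image (hcl hz)
    obtain ⟨x₀, _, hx₀A⟩ := hP (Ioo a b) isOpen_Ioo
      ⟨(a + b) / 2, ⟨by constructor <;> linarith, by constructor <;> linarith⟩⟩
    refine ⟨{t | ∃ p ∈ deriv φ '' A, ∃ q ∈ deriv φ '' A, p ≤ t ∧ t ≤ q}, ?_, ?_, ?_, ?_⟩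
    · refine ⟨fun t1 ht1 t2 ht2 t ht => ?_⟩
      obtain ⟨p, hp, q, hq, h1, h2⟩ := ht1
      obtain ⟨p', hp', q', hq', h1', h2'⟩ := ht2
      exact ⟨p, hp, q', hq', le_trans h1 ht.1, le_trans ht.2 h2'⟩
    · exact ⟨deriv φ x₀, ⟨deriv φ x₀, mem_image_of_mem _ hx₀A, deriv φ x₀,
        mem_image_of_mem _ hx₀A, le_rfl, le_rfl⟩⟩
    · exact fun s hs => ⟨s, hs, s, hs, le_rfl, le_rfl⟩
    · rintro t ⟨_, ⟨xp, hxp, rfl⟩, _, ⟨xq, hxq, rfl⟩, h1, h2⟩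
      have hsub : uIcc xp xq ⊆ Ioo a b :=
        ordConnected_Ioo.uIcc_subset (hAsub hxp) (hAsub hxq)
      have hIVT := intermediate_value_uIcc (hcd.mono hsub)
      have ht' : t ∈ uIcc (deriv φ xp) (deriv φ xq) := by
        rw [uIcc_of_le (le_trans h1 h2)]; exact ⟨h1, h2⟩
      obtain ⟨z, hz, hzt⟩ := hIVT ht'
      exact hzt ▸ hclo z (hsub hz)
  · -- backward direction
    rintro ⟨I, hIoc, hIne, hSI, hIS⟩
    have key : ∀ x ∈ Ioo a b, HasDerivAt φ (deriv φ x) x ∧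
        (∀ p ∈ Ioo a x, (φ p - φ x) / (p - x) ≤ deriv φ x) ∧
        (∀ q ∈ Ioo x b, deriv φ x ≤ (φ q - φ x) / (q - x)) := by
      intro x hx
      set g : ℝ → ℝ := fun y => (φ y - φ x) / (y - x) with hg
      have hgmono : ∀ {p q : ℝ}, p ∈ Ioo a b → q ∈ Ioo a b → p ≠ x → q ≠ x → p ≤ q →
          g p ≤ g q := fun hp hq hpx hqx hpq => hconv.secant_mono hx hp hq hpx hqx hpq
      obtain ⟨p₀, hp₀⟩ : (Ioo a x).Nonempty := nonempty_Ioo.2 hx.1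
      obtain ⟨q₀, hq₀⟩ : (Ioo x b).Nonempty := nonempty_Ioo.2 hx.2
      have hmemL : ∀ p ∈ Ioo a x, p ∈ Ioo a b ∧ p ≠ x := fun p hp =>
        ⟨⟨hp.1, hp.2.trans hx.2⟩, ne_of_lt hp.2⟩
      have hmemR : ∀ q ∈ Ioo x b, q ∈ Ioo a b ∧ q ≠ x := fun q hq =>
        ⟨⟨hx.1.trans hq.1, hq.2⟩, ne_of_gt hq.1⟩
      have hbddL : BddAbove (g '' Ioo a x) := by
        refine ⟨g q₀, ?_⟩
        rintro _ ⟨p, hp, rfl⟩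
        exact hgmono (hmemL p hp).1 (hmemR q₀ hq₀).1 (hmemL p hp).2 (hmemR q₀ hq₀).2
          (le_of_lt (hp.2.trans hq₀.1))
      have hbddR : BddBelow (g '' Ioo x b) := by
        refine ⟨g p₀, ?_⟩
        rintro _ ⟨q, hq, rfl⟩
        exact hgmono (hmemL p₀ hp₀).1 (hmemR q hq).1 (hmemL p₀ hp₀).2 (hmemR q hq).2
          (le_of_lt (hp₀.2.trans hq.1))
      set L := sSup (g '' Ioo a x) with hL
      set R := sInf (g '' Ioo x b) with hR
      have hneL : (g '' Ioo a x).Nonempty := ⟨g p₀, mem_image_of_mem _ hp₀⟩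
      have hneR : (g '' Ioo x b).Nonempty := ⟨g q₀, mem_image_of_mem _ hq₀⟩
      have hgleL : ∀ p ∈ Ioo a x, g p ≤ L := fun p hp =>
        le_csSup hbddL (mem_image_of_mem _ hp)
      have hRleg : ∀ q ∈ Ioo x b, R ≤ g q := fun q hq =>
        csInf_le hbddR (mem_image_of_mem _ hq)
      have hLR : L ≤ R := by
        apply csSup_le hneL
        rintro _ ⟨p, hp, rfl⟩
        apply le_csInf hneR
        rintro _ ⟨q, hq, rfl⟩
        exact hgmono (hmemL p hp).1 (hmemR q hq).1 (hmemL p hp).2 (hmemR q hq).2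
          (le_of_lt (hp.2.trans hq.1))
      have hflip : ∀ u : ℝ, (φ u - φ x) / (u - x) = (φ x - φ u) / (x - u) := by
        intro u
        rw [← neg_div_neg_eq, neg_sub, neg_sub]
      have havoid : ∀ s ∈ deriv φ '' A, s ≤ L ∨ R ≤ s := by
        rintro _ ⟨y, hyA, rfl⟩
        rcases lt_trichotomy y x with hlt | rfl | hgt
        · left
          have h1 := (haff y hyA x hx).1 hlt
          have hy' : y ∈ Ioo a x := ⟨(hAsub hyA).1, hlt⟩
          calc deriv φ y ≤ (φ x - φ y) / (x - y) := h1
            _ = g y := (hflip y).symm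
            _ ≤ L := hgleL y hy'
        · left
          obtain ⟨v, hdv, ⟨p, hp, hgp⟩, -⟩ := hptA y hyA
          rw [hdv]
          exact le_csSup hbddL ⟨p, hp, hgp⟩
        · right
          have h1 := (haff y hyA x hx).2 hgt
          have hy' : y ∈ Ioo x b := ⟨hgt, (hAsub hyA).2⟩
          calc R ≤ g y := hRleg y hy'
            _ = (φ x - φ y) / (x - y) := hflip y
            _ ≤ deriv φ y := h1
      have hLRe : L = R := by
        by_contra hne
        have hlt : L < R := lt_of_le_of_ne hLR hne
        obtain ⟨p, hpI, hpA⟩ := hP (Ioo a x) isOpen_Ioo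
          ⟨p₀, hp₀, (hmemL p₀ hp₀).1⟩
        obtain ⟨q, hqI, hqA⟩ := hP (Ioo x b) isOpen_Ioo
          ⟨q₀, hq₀, (hmemR q₀ hq₀).1⟩
        have hdp : deriv φ p ≤ L := by
          calc deriv φ p ≤ (φ x - φ p) / (x - p) := (haff p hpA x hx).1 hpI.2
            _ = g p := (hflip p).symm
            _ ≤ L := hgleL p hpI
        have hdq : R ≤ deriv φ q := by
          calc R ≤ g q := hRleg q hqI
            _ = (φ x - φ q) / (x - q) := hflip q
            _ ≤ deriv φ q := (haff q hqA x hx).2 hqI.1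
        have htI : (L + R) / 2 ∈ I :=
          hIoc.out (hSI ⟨p, hpA, rfl⟩) (hSI ⟨q, hqA, rfl⟩)
            ⟨by linarith, by linarith⟩
        have htc : (L + R) / 2 ∈ closure (deriv φ '' A) := hIS htI
        have hclosed : closure (deriv φ '' A) ⊆ Iic L ∪ Ici R :=
          closure_minimal (fun s hs => (havoid s hs).elim (fun h => Or.inl h)
            (fun h => Or.inr h)) (isClosed_Iic.union isClosed_Ici)
        rcases hclosed htc with h | h
        · rw [mem_Iic] at h; linarith
        · rw [mem_Ici] at h; linarith
      have htend : Filter.Tendsto g (nhdsWithin x {x}ᶜ) (nhds L) := by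
        rw [tendsto_order]
        constructor
        · intro c hc
          obtain ⟨_, ⟨p, hp, rfl⟩, hcgp⟩ := exists_lt_of_lt_csSup hneL hc
          have hmem : Ioo p b ∈ nhdsWithin x {x}ᶜ :=
            nhdsWithin_le_nhds (isOpen_Ioo.mem_nhds ⟨hp.2, hx.2⟩)
          filter_upwards [hmem, self_mem_nhdsWithin] with y hy hyx
          have hyx' : y ≠ x := fun h => hyx (mem_singleton_iff.2 h)
          rcases lt_or_gt_of_ne hyx' with h1 | h1
          · exact lt_of_lt_of_le hcgp (hgmono (hmemL p hp).1 ⟨lt_trans hp.1 hy.1, h1.trans hx.2⟩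
              (hmemL p hp).2 hyx' (le_of_lt hy.1))
          · have := hRleg y ⟨h1, hy.2⟩
            rw [← hLRe] at this
            exact lt_of_lt_of_le hc this
        · intro c hc
          have hc' : R < c := by rw [← hLRe]; exact hc
          obtain ⟨_, ⟨q, hq, rfl⟩, hgqc⟩ := exists_lt_of_csInf_lt hneR hc'
          have hmem : Ioo a q ∈ nhdsWithin x {x}ᶜ :=
            nhdsWithin_le_nhds (isOpen_Ioo.mem_nhds ⟨hx.1, hq.1⟩)
          filter_upwards [hmem, self_mem_nhdsWithin] with y hy hyx
          have hyx' : y ≠ x := fun h => hyx (mem_singleton_iff.2 h)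
          rcases lt_or_gt_of_ne hyx' with h1 | h1
          · exact lt_of_le_of_lt (hgleL y ⟨hy.1, h1⟩) hc
          · exact lt_of_le_of_lt (hgmono ⟨hx.1.trans h1, lt_trans hy.2 hq.2⟩ (hmemR q hq).1
              hyx' (hmemR q hq).2 (le_of_lt hy.2)) hgqc
      have hslope_eq : slope φ x = g := funext fun y => slope_def_field φ x y
      have hder : HasDerivAt φ L x := by
        rw [hasDerivAt_iff_tendsto_slope, hslope_eq]
        exact htend
      have hdx : deriv φ x = L := hder.deriv
      refine ⟨hdx ▸ hder, fun p hp => ?_, fun q hq => ?_⟩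
      · rw [hdx]; exact hgleL p hp
      · rw [hdx, hLRe]; exact hRleg q hq
    have hdiff : DifferentiableOn ℝ φ (Ioo a b) := fun x hx =>
      ((key x hx).1).differentiableAt.differentiableWithinAt
    have hcont : ContinuousOn (deriv φ) (Ioo a b) := by
      intro x hx
      apply ContinuousAt.continuousWithinAt
      have hten : Filter.Tendsto (deriv φ) (nhds x) (nhds (deriv φ x)) := by
        rw [tendsto_order]
        constructor
        · intro c hc
          have hsl := hasDerivAt_iff_tendsto_slope.1 (key x hx).1
          have hev1 : ∀ᶠ y in nhdsWithin x {x}ᶜ, c < slope φ x y :=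
            (tendsto_order.1 hsl).1 c hc
          have hev2 : ∀ᶠ y in nhdsWithin x (Iio x), c < slope φ x y :=
            hev1.filter_mono (nhdsWithin_mono x (fun y hy => ne_of_lt hy))
          have hev3 : ∀ᶠ y in nhdsWithin x (Iio x), y ∈ Ioi a :=
            Filter.eventually_iff_exists_mem.2 ⟨Ioi a, nhdsWithin_le_nhds
              (isOpen_Ioi.mem_nhds hx.1), fun y hy => hy⟩
          obtain ⟨p, ⟨hcp, hpa⟩, hpx⟩ :=
            ((hev2.and hev3).and self_mem_nhdsWithin).exists
          have hpa'' : a < p := hpa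
          have hpx'' : p < x := hpx
          have hcsl : c < (φ p - φ x) / (p - x) := by
            rw [← slope_def_field φ x p]; exact hcp
          have hφc : ContinuousAt φ x := (key x hx).1.continuousAt
          have htnd : Filter.Tendsto (fun y => (φ p - φ y) / (p - y)) (nhds x)
              (nhds ((φ p - φ x) / (p - x))) := by
            apply Filter.Tendsto.div
            · exact (continuousAt_const.sub hφc)
            · exact (continuousAt_const.sub continuousAt_id)
            · intro h; apply absurd h; intro h2; linarith [sub_eq_zero.1 h2]
          have hflip2 : (φ p - φ x) / (p - x) = (φ x - φ p) / (x - p) := by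
            rw [← neg_div_neg_eq, neg_sub, neg_sub]
          have hev4 : ∀ᶠ y in nhds x, c < (φ p - φ y) / (p - y) :=
            (tendsto_order.1 htnd).1 c hcsl
          have hev5 : ∀ᶠ y in nhds x, y ∈ Ioo p b :=
            isOpen_Ioo.mem_nhds ⟨hpx'', hx.2⟩
          filter_upwards [hev4, hev5] with y hy1 hy2
          have hyI : y ∈ Ioo a b := ⟨hpa''.trans hy2.1, hy2.2⟩
          have := (key y hyI).2.1 p ⟨hpa'', hy2.1⟩
          exact lt_of_lt_of_le hy1 this
        · intro c hc
          have hsl := hasDerivAt_iff_tendsto_slope.1 (key x hx).1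
          have hev1 : ∀ᶠ y in nhdsWithin x {x}ᶜ, slope φ x y < c :=
            (tendsto_order.1 hsl).2 c hc
          have hev2 : ∀ᶠ y in nhdsWithin x (Ioi x), slope φ x y < c :=
            hev1.filter_mono (nhdsWithin_mono x (fun y hy => ne_of_gt hy))
          have hev3 : ∀ᶠ y in nhdsWithin x (Ioi x), y ∈ Iio b :=
            Filter.eventually_iff_exists_mem.2 ⟨Iio b, nhdsWithin_le_nhds
              (isOpen_Iio.mem_nhds hx.2), fun y hy => hy⟩
          obtain ⟨q, ⟨hcq, hqb'⟩, hqx⟩ := ((hev2.and hev3).and self_mem_nhdsWithin).exists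
          have hqb : q < b := hqb'
          have hxq : x < q := hqx
          have hcsl : (φ q - φ x) / (q - x) < c := by
            rw [← slope_def_field φ x q]; exact hcq
          have hφc : ContinuousAt φ x := (key x hx).1.continuousAt
          have htnd : Filter.Tendsto (fun y => (φ q - φ y) / (q - y)) (nhds x)
              (nhds ((φ q - φ x) / (q - x))) := by
            apply Filter.Tendsto.div
            · exact (continuousAt_const.sub hφc)
            · exact (continuousAt_const.sub continuousAt_id)
            · intro h; apply absurd h; intro h2; linarith [sub_eq_zero.1 h2]
          have hev4 : ∀ᶠ y in nhds x, (φ q - φ y) / (q - y) < c :=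
            (tendsto_order.1 htnd).2 c hcsl
          have hev5 : ∀ᶠ y in nhds x, y ∈ Ioo a q :=
            isOpen_Ioo.mem_nhds ⟨hx.1, hxq⟩
          filter_upwards [hev4, hev5] with y hy1 hy2
          have hyI : y ∈ Ioo a b := ⟨hy2.1, hy2.2.trans hqb⟩
          have := (key y hyI).2.2 q ⟨hy2.2, hqb⟩
          exact lt_of_le_of_lt this hy1
      exact hten
    have h01 : (1 : WithTop ℕ∞) = 0 + 1 := rfl
    rw [h01, contDiffOn_succ_iff_deriv_of_isOpen isOpen_Ioo]
    exact ⟨hdiff, by simp, contDiffOn_zero.2 hcont⟩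
end

section
/- With ψ_t as above (ψ_t = ½|·|² + tφ on cl(Ω), +∞ outside, φ continuous, t > 0) and u_t the Hopf–Lax formula u_t(x) = min_{z ∈ cl(Ω)}( |x−z|²/(2t) + φ(z) ), a point y ∈ cl(Ω) is a minimizer in the Hopf–Lax formula for a given x ∈ ℝ^d if and only if y belongs to the touching set Θ_t = {y : ψ_t(y) = ψ_t**(y)} and y ∈ ∂ψ_t*(x). -/
open Set RealInnerProductSpace
open scoped Classical

variable {d : ℕ}

/-- Legendre–Fenchel transform of an extended-real-valued function on `ℝ^d`. -/
noncomputable def legendre (f : EuclideanSpace ℝ (Fin d) → EReal)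
    (x : EuclideanSpace ℝ (Fin d)) : EReal :=
  ⨆ z : EuclideanSpace ℝ (Fin d), ((⟪x, z⟫ : ℝ) : EReal) - f z

/-- Subdifferential of an extended-real-valued function `g` at `x`. -/
def subdiff (g : EuclideanSpace ℝ (Fin d) → EReal)
    (x : EuclideanSpace ℝ (Fin d)) : Set (EuclideanSpace ℝ (Fin d)) :=
  {y | ∀ x', g x + ((⟪y, x' - x⟫ : ℝ) : EReal) ≤ g x'}

/-- `ψ_t = ½|·|² + tφ` on `cl(Ω)`, extended by `+∞` outside. -/
noncomputable def psit (Ω : Set (EuclideanSpace ℝ (Fin d)))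
    (φ : EuclideanSpace ℝ (Fin d) → ℝ) (t : ℝ) :
    EuclideanSpace ℝ (Fin d) → EReal :=
  fun z => if z ∈ closure Ω then ((‖z‖ ^ 2 / 2 + t * φ z : ℝ) : EReal) else ⊤

/-- Auxiliary: the function whose sup over `cl Ω` is the Legendre transform. -/
noncomputable def auxf (t : ℝ) (φ : EuclideanSpace ℝ (Fin d) → ℝ)
    (x z : EuclideanSpace ℝ (Fin d)) : ℝ :=
  ⟪x, z⟫ - ‖z‖ ^ 2 / 2 - t * φ z

/-- With `ψ_t = ½|·|² + tφ` on `cl(Ω)` (`+∞` outside), `φ`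
continuous, `t > 0`, a point `y ∈ cl(Ω)` is a minimizer in the Hopf–Lax formula
`u_t(x) = min_{z ∈ cl(Ω)}(|x−z|²/(2t) + φ(z))` if and only if `y` lies in the
touching set `Θ_t = {y : ψ_t(y) = ψ_t**(y)}` and `y ∈ ∂ψ_t*(x)`. -/
theorem stmt11 {Ω : Set (EuclideanSpace ℝ (Fin d))}
    (hΩopen : IsOpen Ω) (hΩconv : Convex ℝ Ω) (hΩbdd : Bornology.IsBounded Ω)
    (hΩne : Ω.Nonempty)
    {φ : EuclideanSpace ℝ (Fin d) → ℝ} (hφ : ContinuousOn φ (closure Ω))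
    {t : ℝ} (ht : 0 < t)
    (x y : EuclideanSpace ℝ (Fin d)) (hy : y ∈ closure Ω) :
    (∀ z ∈ closure Ω,
        ‖x - y‖ ^ 2 / (2 * t) + φ y ≤ ‖x - z‖ ^ 2 / (2 * t) + φ z) ↔
      (psit Ω φ t y = legendre (legendre (psit Ω φ t)) y ∧
        y ∈ subdiff (legendre (psit Ω φ t)) x) := by
  have hKne : (closure Ω).Nonempty := hΩne.closure
  have hKcpt : IsCompact (closure Ω) :=
    Metric.isCompact_of_isClosed_isBounded isClosed_closure hΩbdd.closure
  have hf : ∀ x' : EuclideanSpace ℝ (Fin d),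
      ContinuousOn (auxf t φ x') (closure Ω) := by
    intro x'
    apply ContinuousOn.sub
    · exact ((continuous_const.inner continuous_id).sub
        ((continuous_norm.pow 2).div_const 2)).continuousOn
    · exact continuousOn_const.mul hφ
  -- the Legendre transform of ψ_t is a real-valued max over cl Ω
  have hleg : ∀ x' : EuclideanSpace ℝ (Fin d), ∃ M : ℝ,
      legendre (psit Ω φ t) x' = (M : EReal) ∧
      (∀ z ∈ closure Ω, auxf t φ x' z ≤ M) ∧
      ∃ z₀ ∈ closure Ω, auxf t φ x' z₀ = M := by
    intro x'
    obtain ⟨z₀, hz₀K, hmax⟩ := hKcpt.exists_isMaxOn hKne (hf x')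
    refine ⟨auxf t φ x' z₀, ?_, fun z hz => hmax hz, z₀, hz₀K, rfl⟩
    apply le_antisymm
    · apply iSup_le
      intro z
      by_cases hz : z ∈ closure Ω
      · rw [psit, if_pos hz, ← EReal.coe_sub, EReal.coe_le_coe_iff]
        have h : auxf t φ x' z ≤ auxf t φ x' z₀ := hmax hz
        simp only [auxf] at h ⊢
        linarith
      · rw [psit, if_neg hz]
        show (_ : EReal) - ⊤ ≤ _
        rw [EReal.sub_top]
        exact bot_le
    · refine le_iSup_of_le z₀ ?_
      rw [psit, if_pos hz₀K, ← EReal.coe_sub, EReal.coe_le_coe_iff]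
      simp only [auxf]
      linarith
  choose M hMeq hMub z₀ hz₀K hz₀eq using hleg
  have hψy : psit Ω φ t y = ((‖y‖ ^ 2 / 2 + t * φ y : ℝ) : EReal) := by
    rw [psit, if_pos hy]
  -- Fenchel–Young : ψ** y ≤ ψ y
  have hFY : legendre (legendre (psit Ω φ t)) y ≤ psit Ω φ t y := by
    rw [show legendre (legendre (psit Ω φ t)) y =
        ⨆ x' : EuclideanSpace ℝ (Fin d),
          ((⟪y, x'⟫ : ℝ) : EReal) - legendre (psit Ω φ t) x' from rfl]
    apply iSup_le
    intro x'
    rw [hMeq x', hψy, ← EReal.coe_sub, EReal.coe_le_coe_iff]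
    have h1 := hMub x' y hy
    simp only [auxf] at h1
    have h2 : ⟪x', y⟫ = ⟪y, x'⟫ := real_inner_comm _ _
    linarith
  -- the minimization problem is equivalent to maximizing auxf t φ x over cl Ω
  have hPiff : (∀ z ∈ closure Ω,
      ‖x - y‖ ^ 2 / (2 * t) + φ y ≤ ‖x - z‖ ^ 2 / (2 * t) + φ z) ↔
      ∀ z ∈ closure Ω, auxf t φ x z ≤ auxf t φ x y := by
    have key : ∀ z : EuclideanSpace ℝ (Fin d),
        ‖x - z‖ ^ 2 / (2 * t) + φ z = ‖x‖ ^ 2 / (2 * t) - auxf t φ x z / t := by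
      intro z
      rw [auxf, norm_sub_sq_real]
      field_simp
      ring
    refine forall₂_congr fun z hz => ?_
    rw [key y, key z, sub_le_sub_iff_left, div_le_div_iff_of_pos_right ht]
  rw [hPiff]
  constructor
  · -- forward direction
    intro hP
    have hMx : M x = auxf t φ x y :=
      le_antisymm (by rw [← hz₀eq x]; exact hP _ (hz₀K x)) (hMub x y hy)
    constructor
    · refine le_antisymm ?_ hFY
      rw [show legendre (legendre (psit Ω φ t)) y =
          ⨆ x' : EuclideanSpace ℝ (Fin d),
            ((⟪y, x'⟫ : ℝ) : EReal) - legendre (psit Ω φ t) x' from rfl]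
      refine le_iSup_of_le x ?_
      rw [hMeq x, hψy, ← EReal.coe_sub, EReal.coe_le_coe_iff, hMx]
      have h2 : ⟪x, y⟫ = ⟪y, x⟫ := real_inner_comm _ _
      simp only [auxf]
      linarith
    · intro x'
      rw [hMeq x, hMeq x', hMx, ← EReal.coe_add, EReal.coe_le_coe_iff]
      have h1 := hMub x' y hy
      have e1 : ⟪y, x' - x⟫ = ⟪x', y⟫ - ⟪x, y⟫ := by
        rw [real_inner_comm, inner_sub_left]
      simp only [auxf] at h1 ⊢
      linarith
  · -- backward direction
    rintro ⟨htouch, hsub⟩ z hz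
    have hsubr : ∀ x', M x + ⟪y, x' - x⟫ ≤ M x' := by
      intro x'
      have := hsub x'
      rw [hMeq x, hMeq x', ← EReal.coe_add, EReal.coe_le_coe_iff] at this
      exact this
    have hupper : legendre (legendre (psit Ω φ t)) y ≤
        ((⟪y, x⟫ - M x : ℝ) : EReal) := by
      rw [show legendre (legendre (psit Ω φ t)) y =
          ⨆ x' : EuclideanSpace ℝ (Fin d),
            ((⟪y, x'⟫ : ℝ) : EReal) - legendre (psit Ω φ t) x' from rfl]
      apply iSup_le
      intro x'
      rw [hMeq x', ← EReal.coe_sub, EReal.coe_le_coe_iff]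
      have h1 := hsubr x'
      have e1 : ⟪y, x' - x⟫ = ⟪y, x'⟫ - ⟪y, x⟫ := inner_sub_right _ _ _
      linarith
    have hkey : M x ≤ auxf t φ x y := by
      have hψle : ((‖y‖ ^ 2 / 2 + t * φ y : ℝ) : EReal) ≤
          ((⟪y, x⟫ - M x : ℝ) : EReal) := by
        rw [← hψy, htouch]; exact hupper
      rw [EReal.coe_le_coe_iff] at hψle
      have h2 : ⟪y, x⟫ = ⟪x, y⟫ := real_inner_comm _ _
      simp only [auxf]
      linarith
    calc auxf t φ x z ≤ M x := hMub x z hz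
      _ ≤ auxf t φ x y := hkey
end

section
/- Let t > 0, y ∈ cl(Ω) ∩ Θ_t (the touching set for ψ_t = ½|·|² + tφ), y ∈ Ω, and suppose φ is differentiable at y. Then the subdifferential ∂ψ_t**(y) is the singleton {y + t∇φ(y)}. -/
open Set RealInnerProductSpace
open scoped Classical

variable {d : ℕ}

/-- Let `t > 0` and let `y ∈ Ω` belong to the touching set
`Θ_t = {y : ψ_t(y) = ψ_t**(y)}` for `ψ_t = ½|·|² + tφ`.  If `φ` is
differentiable at `y` with gradient `g`, then the subdifferential
`∂ψ_t**(y)` is the singleton `{y + t∇φ(y)}`. -/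
theorem stmt12 {Ω : Set (EuclideanSpace ℝ (Fin d))}
    (hΩopen : IsOpen Ω) (hΩconv : Convex ℝ Ω) (hΩbdd : Bornology.IsBounded Ω)
    (hΩne : Ω.Nonempty)
    {φ : EuclideanSpace ℝ (Fin d) → ℝ} (hφ : ContinuousOn φ (closure Ω))
    {t : ℝ} (ht : 0 < t)
    {y g : EuclideanSpace ℝ (Fin d)} (hyΩ : y ∈ Ω)
    (htouch : psit Ω φ t y = legendre (legendre (psit Ω φ t)) y)
    (hg : HasGradientAt φ g y) :
    subdiff (legendre (legendre (psit Ω φ t))) y = {y + t • g} := by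
  classical
  set K := closure Ω with hKdef
  set F : EuclideanSpace ℝ (Fin d) → ℝ := fun x => ‖x‖ ^ 2 / 2 + t * φ x with hFdef
  have hpsit : ∀ z, psit Ω φ t z = if z ∈ K then ((F z : ℝ) : EReal) else ⊤ := fun z => rfl
  have hK : IsCompact K :=
    Metric.isCompact_of_isClosed_isBounded isClosed_closure hΩbdd.closure
  have hKne : K.Nonempty := hΩne.closure
  have hyK : y ∈ K := subset_closure hyΩ
  have hFc : ContinuousOn F K :=
    (((continuous_norm.pow 2).div_const 2).continuousOn).add (hφ.const_smul t)
  have hc : ∀ w, ContinuousOn (fun z => ⟪w, z⟫ - F z) K := fun w =>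
    ((continuous_const.inner continuous_id).continuousOn).sub hFc
  set G : EuclideanSpace ℝ (Fin d) → ℝ :=
    fun w => sSup ((fun z => ⟪w, z⟫ - F z) '' K) with hGdef
  have hGge : ∀ w, ∀ z ∈ K, ⟪w, z⟫ - F z ≤ G w := fun w z hz =>
    le_csSup (hK.bddAbove_image (hc w)) (mem_image_of_mem _ hz)
  have hfstar : ∀ w, legendre (psit Ω φ t) w = ((G w : ℝ) : EReal) := by
    intro w
    obtain ⟨z₀, hz₀K, hz₀⟩ := hK.exists_isMaxOn hKne (hc w)
    have hgreat : IsGreatest ((fun z => ⟪w, z⟫ - F z) '' K) (⟪w, z₀⟫ - F z₀) :=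
      ⟨mem_image_of_mem _ hz₀K, by rintro _ ⟨z, hz, rfl⟩; exact hz₀ hz⟩
    have hGw : G w = ⟪w, z₀⟫ - F z₀ := hgreat.csSup_eq
    rw [hGw]
    apply le_antisymm
    · apply iSup_le
      intro z
      by_cases hz : z ∈ K
      · rw [hpsit z, if_pos hz, ← EReal.coe_sub, EReal.coe_le_coe_iff]
        exact hz₀ hz
      · rw [hpsit z, if_neg hz, EReal.sub_top]
        exact bot_le
    · calc ((⟪w, z₀⟫ - F z₀ : ℝ) : EReal) = ((⟪w, z₀⟫ : ℝ) : EReal) - psit Ω φ t z₀ := by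
            rw [hpsit z₀, if_pos hz₀K, EReal.coe_sub]
        _ ≤ _ := le_iSup (fun z => ((⟪w, z⟫ : ℝ) : EReal) - psit Ω φ t z) z₀
  set B := legendre (legendre (psit Ω φ t)) with hBdef
  have hbi : ∀ x, B x = ⨆ z, ((⟪x, z⟫ - G z : ℝ) : EReal) := by
    intro x
    rw [hBdef, legendre]
    exact iSup_congr fun z => by rw [hfstar z, ← EReal.coe_sub]
  have hB_ge : ∀ x z, ((⟪x, z⟫ - G z : ℝ) : EReal) ≤ B x := fun x z => by
    rw [hbi]; exact le_iSup (fun z => ((⟪x, z⟫ - G z : ℝ) : EReal)) z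
  have hB_le : ∀ (x : EuclideanSpace ℝ (Fin d)) (c : ℝ),
      (∀ z, ⟪x, z⟫ - G z ≤ c) → B x ≤ (c : EReal) := fun x c h => by
    rw [hbi]; exact iSup_le fun z => EReal.coe_le_coe_iff.mpr (h z)
  have hBy : B y = ((F y : ℝ) : EReal) := by
    rw [← htouch, hpsit y, if_pos hyK]
  have hAy : ∀ z, ⟪y, z⟫ - G z ≤ F y := fun z => by
    have h := hB_ge y z; rw [hBy] at h; exact_mod_cast h
  have hAK : ∀ x ∈ K, ∀ z, ⟪x, z⟫ - G z ≤ F x := by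
    intro x hx z
    have h := hGge z x hx
    rw [real_inner_comm] at h
    linarith
  set p := y + t • g with hpdef
  have hF : HasFDerivAt F (innerSL ℝ p) y := by
    have h1 : HasFDerivAt (fun x : EuclideanSpace ℝ (Fin d) => ‖x‖ ^ 2) (2 • innerSL ℝ y) y :=
      (hasStrictFDerivAt_norm_sq y).hasFDerivAt
    have h2 := ((h1.const_mul (1/2 : ℝ)).add ((hg.hasFDerivAt).const_mul t))
    have hfe : F = fun x => (1/2 : ℝ) * ‖x‖ ^ 2 + t * φ x := by funext x; rw [hFdef]; ring
    rw [hfe]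
    refine HasFDerivAt.congr_fderiv h2 ?_
    ext v
    simp only [ContinuousLinearMap.add_apply, ContinuousLinearMap.smul_apply, innerSL_apply_apply,
      InnerProductSpace.toDual_apply_apply, smul_eq_mul, hpdef]
    rw [inner_add_left, real_inner_smul_left]
    ring
  obtain ⟨r, hr, hball⟩ := Metric.isOpen_iff.mp hΩopen y hyΩ
  -- membership
  have hmem : p ∈ subdiff B y := by
    intro x'
    rw [hBy]
    by_cases htop : B x' = ⊤
    · rw [htop]; exact le_top
    have hnbot : B x' ≠ ⊥ := by
      intro h
      have h0 := hB_ge x' 0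
      rw [h] at h0
      exact (not_le.mpr (EReal.bot_lt_coe _)) h0
    set c' := (B x').toReal with hc'
    have hBx' : B x' = (c' : EReal) := (EReal.coe_toReal htop hnbot).symm
    have hAx' : ∀ z, ⟪x', z⟫ - G z ≤ c' := fun z => by
      have h := hB_ge x' z; rw [hBx'] at h; exact_mod_cast h
    set v := x' - y with hv
    have hvpos : (0:ℝ) < ‖v‖ + 1 := by positivity
    set s₀ : ℝ := min (r / (‖v‖ + 1)) 1 with hs₀def
    have hs₀ : 0 < s₀ := lt_min (div_pos hr hvpos) one_pos
    have key : ∀ s ∈ Ioo (0:ℝ) s₀, F y + (F y - F (y - s • v)) / s ≤ c' := by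
      intro s hs
      have hs1 : s < 1 := lt_of_lt_of_le hs.2 (min_le_right _ _)
      have hsr : s * ‖v‖ < r := by
        have h2 : s < r / (‖v‖ + 1) := lt_of_lt_of_le hs.2 (min_le_left _ _)
        have h3 := (lt_div_iff₀ hvpos).mp h2
        nlinarith [hs.1, norm_nonneg v]
      have hmem2 : y - s • v ∈ Ω := by
        apply hball
        rw [Metric.mem_ball, dist_eq_norm]
        have he : y - s • v - y = -(s • v) := by abel
        rw [he, norm_neg, norm_smul, Real.norm_eq_abs, abs_of_pos hs.1]
        exact hsr
      have hKmem : y - s • v ∈ K := subset_closure hmem2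
      have h1 : ∀ z, 2 * (⟪y, z⟫ - G z) ≤ (1 - s) * F y + s * c' + F (y - s • v) := by
        intro z
        have e1 := hAx' z
        have e2 := hAK _ hKmem z
        have e3 := hAy z
        have hiz : ⟪y - s • v, z⟫ = ⟪y, z⟫ - s * ⟪v, z⟫ := by
          rw [inner_sub_left, real_inner_smul_left]
        have hvz : ⟪v, z⟫ = ⟪x', z⟫ - ⟪y, z⟫ := by
          rw [hv]; exact inner_sub_left _ _ _
        rw [hiz] at e2
        have e1' : ⟪y, z⟫ + ⟪v, z⟫ - G z ≤ c' := by linarith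
        have t1 : (1 - s) * (⟪y, z⟫ - G z) ≤ (1 - s) * F y :=
          mul_le_mul_of_nonneg_left e3 (by linarith)
        have t2 : s * (⟪y, z⟫ + ⟪v, z⟫ - G z) ≤ s * c' :=
          mul_le_mul_of_nonneg_left e1' hs.1.le
        nlinarith [t1, t2, e2]
      have h2 : F y ≤ ((1 - s) * F y + s * c' + F (y - s • v)) / 2 := by
        have hz2 : ∀ z : EuclideanSpace ℝ (Fin d),
            ⟪y, z⟫ - G z ≤ ((1 - s) * F y + s * c' + F (y - s • v)) / 2 := by
          intro z
          have hh := h1 z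
          rw [le_div_iff₀ (by norm_num : (0:ℝ) < 2)]
          linarith
        have h := hB_le y (((1 - s) * F y + s * c' + F (y - s • v)) / 2) hz2
        rw [hBy] at h
        exact_mod_cast h
      have h3 : (F y - F (y - s • v)) / s ≤ c' - F y := by
        rw [div_le_iff₀ hs.1]
        rw [le_div_iff₀ (by norm_num : (0:ℝ) < 2)] at h2
        nlinarith [h2]
      linarith
    have hline : HasDerivAt (fun s : ℝ => y - s • v) (-v) 0 := by
      simpa using ((hasDerivAt_id (0:ℝ)).smul_const v).const_sub y
    have hgF : HasFDerivAt F (innerSL ℝ p) ((fun s : ℝ => y - s • v) 0) := by simpa using hF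
    have hcomp : HasDerivAt (fun s : ℝ => F (y - s • v)) (-⟪p, v⟫) 0 := by
      have hc2 := hgF.comp_hasDerivAt 0 hline
      simp only [innerSL_apply_apply, inner_neg_right] at hc2
      exact hc2
    have hslope := hasDerivAt_iff_tendsto_slope.mp hcomp
    have hmono : nhdsWithin (0:ℝ) (Ioi 0) ≤ nhdsWithin (0:ℝ) ({0}ᶜ) :=
      nhdsWithin_mono 0 (fun x hx => ne_of_gt hx)
    have hten : Filter.Tendsto (fun s : ℝ => F y + (F y - F (y - s • v)) / s)
        (nhdsWithin (0:ℝ) (Ioi 0)) (nhds (F y + ⟪p, v⟫)) := by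
      have h := ((hslope.mono_left hmono).neg).const_add (F y)
      have hval : F y + - -⟪p, v⟫ = F y + ⟪p, v⟫ := by ring
      rw [hval] at h
      apply h.congr
      intro s
      rw [slope_def_field]
      simp only [zero_smul, sub_zero]
      ring_nf
    have hfin : F y + ⟪p, v⟫ ≤ c' :=
      le_of_tendsto hten (Filter.eventually_of_mem
        (Ioo_mem_nhdsGT_of_mem ⟨le_refl (0:ℝ), hs₀⟩) key)
    calc ((F y : ℝ) : EReal) + ((⟪p, x' - y⟫ : ℝ) : EReal)
        = ((F y + ⟪p, v⟫ : ℝ) : EReal) := by rw [← hv]; norm_cast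
      _ ≤ ((c' : ℝ) : EReal) := EReal.coe_le_coe_iff.mpr hfin
      _ = B x' := hBx'.symm
  -- uniqueness
  have huniq : ∀ q ∈ subdiff B y, q = p := by
    intro q hq
    have hlocal : ∀ x' ∈ Metric.ball y r, F y + ⟪q, x' - y⟫ ≤ F x' := by
      intro x' hx'
      have h1 := hq x'
      rw [hBy] at h1
      have h2 : B x' ≤ ((F x' : ℝ) : EReal) :=
        hB_le x' (F x') (hAK x' (subset_closure (hball hx')))
      have h3 := le_trans h1 h2
      rw [← EReal.coe_add] at h3
      exact_mod_cast h3
    have hlm : IsLocalMin (fun x => F x - ⟪q, x⟫) y := by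
      filter_upwards [Metric.ball_mem_nhds y hr] with x hx
      have h := hlocal x hx
      have hin : ⟪q, x - y⟫ = ⟪q, x⟫ - ⟪q, y⟫ := inner_sub_right _ _ _
      show F y - ⟪q, y⟫ ≤ F x - ⟪q, x⟫
      linarith [h, hin.le, hin.ge]
    have hΦ : HasFDerivAt (fun x => F x - ⟪q, x⟫) (innerSL ℝ p - innerSL ℝ q) y := by
      exact hF.sub ((innerSL ℝ q).hasFDerivAt)
    have h0 := hlm.hasFDerivAt_eq_zero hΦ
    have h1 : ⟪p - q, p - q⟫ = (0:ℝ) := by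
      have h2 := congrArg (fun L : EuclideanSpace ℝ (Fin d) →L[ℝ] ℝ => L (p - q)) h0
      simp only [ContinuousLinearMap.sub_apply, ContinuousLinearMap.zero_apply,
        innerSL_apply_apply] at h2
      rw [inner_sub_left]
      linarith [h2.le, h2.ge]
    have h2 : p - q = 0 := inner_self_eq_zero.mp h1
    have : p = q := by
      have := sub_eq_zero.mp h2
      exact this
    exact this.symm
  ext q
  simp only [mem_singleton_iff]
  constructor
  · intro hq
    exact huniq q hq
  · intro hq
    rw [hq]
    exact hmem
end

section
/- Let Ω ⊆ ℝ^d be a bounded open convex set, φ : cl(Ω) → ℝ continuous, convex, and locally affine a.e., with A the open full-measure set where φ is locally affine, components A_i with ∇φ = v_i on A_i. Then for all t > 0, the Monge–Ampère measure κ_t of ψ_t* (defined by κ_t(B) = λ(∂ψ_t*(B))) equals Lebesgue measure restricted to the disjoint union X_t(A) = ⊔_i (A_i + t v_i); in particular κ_t is absolutely continuous with respect to Lebesgue measure. -/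
open Set MeasureTheory RealInnerProductSpace
open scoped Classical
set_option maxHeartbeats 1000000

variable {d : ℕ}

private lemma term_le_legendre {Ω : Set (EuclideanSpace ℝ (Fin d))}
    {φ : EuclideanSpace ℝ (Fin d) → ℝ} {t : ℝ} (x : EuclideanSpace ℝ (Fin d))
    {z : EuclideanSpace ℝ (Fin d)} (hz : z ∈ closure Ω) :
    ((⟪x, z⟫ - (‖z‖ ^ 2 / 2 + t * φ z) : ℝ) : EReal) ≤ legendre (psit Ω φ t) x := by
  have h := le_iSup (fun z => ((⟪x, z⟫ : ℝ) : EReal) - psit Ω φ t z) z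
  simp only [psit, if_pos hz] at h
  rwa [EReal.coe_sub]

private lemma legendre_le {Ω : Set (EuclideanSpace ℝ (Fin d))}
    {φ : EuclideanSpace ℝ (Fin d) → ℝ} {t : ℝ} {x : EuclideanSpace ℝ (Fin d)} {M : ℝ}
    (hM : ∀ z ∈ closure Ω, ⟪x, z⟫ - (‖z‖ ^ 2 / 2 + t * φ z) ≤ M) :
    legendre (psit Ω φ t) x ≤ (M : EReal) := by
  refine iSup_le fun z => ?_
  by_cases hz : z ∈ closure Ω
  · simp only [psit, if_pos hz, ← EReal.coe_sub]
    exact_mod_cast hM z hz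
  · simp [psit, if_neg hz]

private lemma legendre_real {Ω : Set (EuclideanSpace ℝ (Fin d))}
    {φ : EuclideanSpace ℝ (Fin d) → ℝ} (hΩbdd : Bornology.IsBounded Ω) (hΩne : Ω.Nonempty)
    (hφcont : ContinuousOn φ (closure Ω)) (t : ℝ) (x : EuclideanSpace ℝ (Fin d)) :
    legendre (psit Ω φ t) x = (((legendre (psit Ω φ t) x).toReal : ℝ) : EReal) := by
  have hK : IsCompact (closure Ω) :=
    Metric.isCompact_of_isClosed_isBounded isClosed_closure hΩbdd.closure
  obtain ⟨C, hC⟩ := hK.exists_bound_of_continuousOn hφcont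
  obtain ⟨R, hR⟩ := hΩbdd.closure.exists_norm_le
  obtain ⟨z0, hz0⟩ := hΩne
  have hbot := term_le_legendre (Ω := Ω) (φ := φ) (t := t) x (subset_closure hz0)
  have htop : legendre (psit Ω φ t) x ≤ ((‖x‖ * R + |t| * C : ℝ) : EReal) := by
    refine legendre_le fun z hz => ?_
    have h1 : ⟪x, z⟫ ≤ ‖x‖ * ‖z‖ := real_inner_le_norm x z
    have h2 := hR z hz
    have h3 : |φ z| ≤ C := by simpa using hC z hz
    have h4 : -(t * φ z) ≤ |t| * C := by
      calc -(t * φ z) ≤ |t * φ z| := neg_le_abs _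
        _ = |t| * |φ z| := abs_mul _ _
        _ ≤ |t| * C := mul_le_mul_of_nonneg_left h3 (abs_nonneg t)
    nlinarith [sq_nonneg ‖z‖, norm_nonneg x,
      mul_le_mul_of_nonneg_left h2 (norm_nonneg x)]
  exact (EReal.coe_toReal (htop.trans_lt (EReal.coe_lt_top _)).ne
    ((lt_of_lt_of_le (EReal.bot_lt_coe _) hbot).ne')).symm

/-- A local affine slope of a convex function is a global subgradient. -/
private lemma local_slope_subgrad {Ω : Set (EuclideanSpace ℝ (Fin d))}
    {φ : EuclideanSpace ℝ (Fin d) → ℝ} (hφconv : ConvexOn ℝ (closure Ω) φ)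
    {y v : EuclideanSpace ℝ (Fin d)} {h : ℝ}
    (hfe : ∀ᶠ w in nhds y, φ w = ⟪v, w⟫ + h) (hy : y ∈ closure Ω)
    {z : EuclideanSpace ℝ (Fin d)} (hz : z ∈ closure Ω) :
    φ y + ⟪v, z - y⟫ ≤ φ z := by
  have hyφ : φ y = ⟪v, y⟫ + h := hfe.self_of_nhds
  have hcont : Continuous fun s : ℝ => y + s • (z - y) := by continuity
  have htend : Filter.Tendsto (fun s : ℝ => y + s • (z - y)) (nhds 0) (nhds y) := by
    refine hcont.tendsto' 0 y ?_
    simp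
  have h1 : ∀ᶠ s : ℝ in nhds 0, φ (y + s • (z - y)) = ⟪v, y + s • (z - y)⟫ + h :=
    htend.eventually hfe
  have h2 : ∀ᶠ s : ℝ in nhdsWithin (0 : ℝ) (Ioi 0),
      (φ (y + s • (z - y)) = ⟪v, y + s • (z - y)⟫ + h) ∧ s ≤ 1 ∧ 0 < s := by
    filter_upwards [nhdsWithin_le_nhds h1,
      nhdsWithin_le_nhds (eventually_le_nhds (by norm_num : (0:ℝ) < 1)),
      self_mem_nhdsWithin] with s hs hs1 hs0
    exact ⟨hs, hs1, hs0⟩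
  obtain ⟨s, hs, hs1, hs0⟩ := h2.exists
  have hcomb : y + s • (z - y) = (1 - s) • y + s • z := by module
  have hconv := hφconv.2 hy hz (by linarith : (0:ℝ) ≤ 1 - s) hs0.le (by ring)
  rw [← hcomb] at hconv
  rw [hs] at hconv
  have hinner : ⟪v, y + s • (z - y)⟫ = ⟪v, y⟫ + s * ⟪v, z - y⟫ := by
    rw [inner_add_right, inner_smul_right]
  rw [hinner, smul_eq_mul, smul_eq_mul] at hconv
  rw [hyφ] at hconv ⊢
  have : s * ⟪v, z - y⟫ ≤ s * (φ z - (⟪v, y⟫ + h)) := by nlinarith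
  have := (mul_le_mul_iff_right₀ hs0).mp this
  linarith

/-- On a neighbourhood where `φ` is affine, its gradient is the slope. -/
private lemma grad_eq_slope {φ : EuclideanSpace ℝ (Fin d) → ℝ}
    {y v : EuclideanSpace ℝ (Fin d)} {h : ℝ}
    (hfe : ∀ᶠ w in nhds y, φ w = ⟪v, w⟫ + h) : gradient φ y = v := by
  have h1 : HasFDerivAt (fun w : EuclideanSpace ℝ (Fin d) => ⟪v, w⟫ + h)
      (innerSL ℝ v) y := ((innerSL ℝ v).hasFDerivAt).add_const h
  have h2 : HasFDerivAt φ (innerSL ℝ v) y := h1.congr_of_eventuallyEq hfe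
  have h3 : (InnerProductSpace.toDual ℝ (EuclideanSpace ℝ (Fin d)) v :
      EuclideanSpace ℝ (Fin d) →L[ℝ] ℝ) = innerSL ℝ v := by
    ext w; simp [InnerProductSpace.toDual_apply_apply]
  have h4 : HasGradientAt φ v y := by
    rw [hasGradientAt_iff_hasFDerivAt, h3]; exact h2
  exact h4.gradient

/-- The sup defining `ψ_t*(y + t v)` is attained at `y`. -/
private lemma attain {Ω : Set (EuclideanSpace ℝ (Fin d))}
    {φ : EuclideanSpace ℝ (Fin d) → ℝ} (hφconv : ConvexOn ℝ (closure Ω) φ)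
    {t : ℝ} (ht : 0 ≤ t) {y v : EuclideanSpace ℝ (Fin d)} {h : ℝ}
    (hfe : ∀ᶠ w in nhds y, φ w = ⟪v, w⟫ + h) (hy : y ∈ closure Ω)
    {z : EuclideanSpace ℝ (Fin d)} (hz : z ∈ closure Ω) :
    ⟪y + t • v, z⟫ - (‖z‖ ^ 2 / 2 + t * φ z) ≤
      ⟪y + t • v, y⟫ - (‖y‖ ^ 2 / 2 + t * φ y) := by
  have hsub := local_slope_subgrad hφconv hfe hy hz
  have hmul : t * (φ y + ⟪v, z - y⟫) ≤ t * φ z := mul_le_mul_of_nonneg_left hsub ht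
  have hnorm : ‖z‖ ^ 2 = ‖y‖ ^ 2 + 2 * ⟪y, z - y⟫ + ‖z - y‖ ^ 2 := by
    have := norm_add_sq_real y (z - y)
    simpa using this
  have hiz : ⟪y + t • v, z⟫ = ⟪y + t • v, y⟫ + (⟪y, z - y⟫ + t * ⟪v, z - y⟫) := by
    simp only [inner_add_left, inner_sub_right, real_inner_smul_left]
    ring
  nlinarith [sq_nonneg ‖z - y‖]

/-- First-order condition: if the sup defining `ψ_t*(x)` is attained at an
interior point `y` where `φ` is affine, then `x = y + t v`. -/
private lemma first_order {Ω : Set (EuclideanSpace ℝ (Fin d))} (hΩopen : IsOpen Ω)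
    {φ : EuclideanSpace ℝ (Fin d) → ℝ} {t : ℝ} (ht : 0 < t)
    {x y v : EuclideanSpace ℝ (Fin d)} {h : ℝ}
    (hfe : ∀ᶠ w in nhds y, φ w = ⟪v, w⟫ + h) (hy : y ∈ Ω)
    (hmax : ∀ z ∈ closure Ω, ⟪x, z⟫ - (‖z‖ ^ 2 / 2 + t * φ z) ≤
      ⟪x, y⟫ - (‖y‖ ^ 2 / 2 + t * φ y)) :
    x = y + t • v := by
  set w := x - t • v with hw
  have hfe' : ∀ᶠ u in nhds y, φ u = ⟪v, u⟫ + h ∧ u ∈ Ω :=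
    hfe.and (hΩopen.eventually_mem hy)
  obtain ⟨ε, hε, hball⟩ := Metric.eventually_nhds_iff.mp hfe'
  -- choose a small positive step
  set s := min (1 : ℝ) (ε / (2 * (‖w - y‖ + 1))) with hs
  have hd : 0 < ‖w - y‖ + 1 := by positivity
  have hs0 : 0 < s := lt_min one_pos (by positivity)
  have hs1 : s ≤ 1 := min_le_left _ _
  set z := y + s • (w - y) with hzdef
  have hzy : z - y = s • (w - y) := by simp [hzdef]
  have hznear : dist z y < ε := by
    rw [dist_eq_norm]
    have : ‖z - y‖ = s * ‖w - y‖ := by rw [hzy, norm_smul, Real.norm_eq_abs, abs_of_pos hs0]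
    rw [this]
    have h2 : s ≤ ε / (2 * (‖w - y‖ + 1)) := min_le_right _ _
    have h3 : s * ‖w - y‖ ≤ ε / (2 * (‖w - y‖ + 1)) * ‖w - y‖ :=
      mul_le_mul_of_nonneg_right h2 (norm_nonneg _)
    have h4 : ε / (2 * (‖w - y‖ + 1)) * ‖w - y‖ < ε := by
      rw [div_mul_eq_mul_div, div_lt_iff₀ (by positivity)]
      nlinarith [norm_nonneg (w - y)]
    linarith
  obtain ⟨hφz, hzΩ⟩ := hball hznear
  have hφy : φ y = ⟪v, y⟫ + h ∧ y ∈ Ω := hball (by simpa using hε)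
  have hkey := hmax z (subset_closure hzΩ)
  rw [hφz, hφy.1] at hkey
  -- expand everything
  have hxw : x = w + t • v := by rw [hw]; abel
  have e1 : ⟪x, z⟫ = ⟪x, y⟫ + s * ⟪x, w - y⟫ := by
    rw [hzdef, inner_add_right, inner_smul_right]
  have e2 : ⟪v, z⟫ = ⟪v, y⟫ + s * ⟪v, w - y⟫ := by
    rw [hzdef, inner_add_right, inner_smul_right]
  have e3 : ‖z‖ ^ 2 = ‖y‖ ^ 2 + 2 * (s * ⟪y, w - y⟫) + s ^ 2 * ‖w - y‖ ^ 2 := by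
    have h5 := norm_add_sq_real y (s • (w - y))
    rw [← hzdef] at h5
    rw [h5, real_inner_smul_right, norm_smul, Real.norm_eq_abs, mul_pow, sq_abs]
  have e4 : ⟪x, w - y⟫ = ⟪w, w - y⟫ + t * ⟪v, w - y⟫ := by
    rw [hxw, inner_add_left, real_inner_smul_left]
  have e5 : ⟪w, w - y⟫ - ⟪y, w - y⟫ = ‖w - y‖ ^ 2 := by
    rw [← inner_sub_left, real_inner_self_eq_norm_sq]
  have hfinal : s * ‖w - y‖ ^ 2 ≤ s ^ 2 * ‖w - y‖ ^ 2 / 2 := by nlinarith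
  have : ‖w - y‖ ^ 2 ≤ s * ‖w - y‖ ^ 2 / 2 := by
    rcases le_or_gt (‖w - y‖ ^ 2) 0 with h6 | h6
    · nlinarith
    · nlinarith
  have hwy : ‖w - y‖ ^ 2 ≤ 0 := by nlinarith
  have : w = y := by
    have := sq_eq_zero_iff.mp (le_antisymm hwy (sq_nonneg _))
    rwa [norm_sub_eq_zero_iff] at this
  rw [hw] at this
  rw [← this]; abel

/-- Let `Ω ⊆ ℝ^d` be bounded open convex, `φ` continuous,
convex and locally affine a.e. on `cl(Ω)`, with `A` the open full-measure set
where `φ` is locally affine.  For every `t > 0` the Monge–Ampère measure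
`κ_t(B) = λ(∂ψ_t*(B))` of `ψ_t*` equals Lebesgue measure restricted to
`X_t(A)`, where `X_t(z) = z + t∇φ(z)`; in particular `κ_t ≪ λ`. -/
theorem stmt13 {Ω : Set (EuclideanSpace ℝ (Fin d))}
    (hΩopen : IsOpen Ω) (hΩconv : Convex ℝ Ω) (hΩbdd : Bornology.IsBounded Ω)
    (hΩne : Ω.Nonempty)
    {φ : EuclideanSpace ℝ (Fin d) → ℝ} (hφcont : ContinuousOn φ (closure Ω))
    (hφconv : ConvexOn ℝ (closure Ω) φ)
    (A : Set (EuclideanSpace ℝ (Fin d)))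
    (hA : A = {x ∈ Ω | ∃ (v : EuclideanSpace ℝ (Fin d)) (h : ℝ),
      ∀ᶠ y in nhds x, φ y = ⟪v, y⟫ + h})
    (hfull : volume (Ω \ A) = 0)
    {t : ℝ} (ht : 0 < t) :
    ∀ B : Set (EuclideanSpace ℝ (Fin d)), MeasurableSet B →
      volume (⋃ x ∈ B, subdiff (legendre (psit Ω φ t)) x) =
        volume (((fun z => z + t • gradient φ z) '' A) ∩ B) := by
  intro B hB
  set X : EuclideanSpace ℝ (Fin d) → EuclideanSpace ℝ (Fin d) :=
    fun z => z + t • gradient φ z with hX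
  set r : EuclideanSpace ℝ (Fin d) → ℝ :=
    fun x => (legendre (psit Ω φ t) x).toReal with hrdef
  have hr : ∀ x, legendre (psit Ω φ t) x = ((r x : ℝ) : EReal) :=
    fun x => legendre_real hΩbdd hΩne hφcont t x
  -- real-valued Young inequality
  have young : ∀ x z, z ∈ closure Ω → ⟪x, z⟫ - (‖z‖ ^ 2 / 2 + t * φ z) ≤ r x := by
    intro x z hz
    have h1 := term_le_legendre (Ω := Ω) (φ := φ) (t := t) x hz
    rw [hr x] at h1
    exact_mod_cast h1
  have rle : ∀ (x : EuclideanSpace ℝ (Fin d)) (M : ℝ),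
      (∀ z ∈ closure Ω, ⟪x, z⟫ - (‖z‖ ^ 2 / 2 + t * φ z) ≤ M) → r x ≤ M := by
    intro x M hM
    have h1 := legendre_le hM
    rw [hr x] at h1
    exact_mod_cast h1
  -- real form of subdifferential membership
  have hsub : ∀ x y, y ∈ subdiff (legendre (psit Ω φ t)) x ↔
      ∀ x', r x + ⟪y, x' - x⟫ ≤ r x' := by
    intro x y
    constructor
    · intro hy x'
      have h1 := hy x'
      rw [hr x, hr x', ← EReal.coe_add] at h1
      exact_mod_cast h1
    · intro hy x'
      rw [hr x, hr x', ← EReal.coe_add]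
      exact_mod_cast hy x'
  -- data of points of A
  have hAdata : ∀ a ∈ A, a ∈ Ω ∧ ∃ (v : EuclideanSpace ℝ (Fin d)) (h : ℝ),
      ∀ᶠ y in nhds a, φ y = ⟪v, y⟫ + h := by
    intro a ha; rw [hA] at ha; exact ⟨ha.1, ha.2⟩
  -- attainment of the sup at points of A
  have hattain : ∀ y ∈ A, r (X y) = ⟪X y, y⟫ - (‖y‖ ^ 2 / 2 + t * φ y) := by
    intro y hy
    obtain ⟨hyΩ, v, h, hfe⟩ := hAdata y hy
    have hgrad : gradient φ y = v := grad_eq_slope hfe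
    have hXy : X y = y + t • v := by rw [hX]; simp [hgrad]
    refine le_antisymm ?_ (young (X y) y (subset_closure hyΩ))
    refine rle _ _ fun z hz => ?_
    rw [hXy]
    exact attain hφconv ht.le hfe (subset_closure hyΩ) hz
  -- K1 : A ∩ X⁻¹ B ⊆ subdiff stuff
  have K1 : ∀ y ∈ A, y ∈ subdiff (legendre (psit Ω φ t)) (X y) := by
    intro y hy
    rw [hsub]
    intro x'
    have hA1 := hattain y hy
    have hyoung := young x' y (subset_closure (hAdata y hy).1)
    have e1 : ⟪y, x' - X y⟫ = ⟪x', y⟫ - ⟪X y, y⟫ := by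
      rw [inner_sub_right, real_inner_comm y x', real_inner_comm y (X y)]
    linarith
  -- K2 : converse
  have K2 : ∀ y ∈ A, ∀ x, y ∈ subdiff (legendre (psit Ω φ t)) x → x = X y := by
    intro y hy x hx
    obtain ⟨hyΩ, v, h, hfe⟩ := hAdata y hy
    have hgrad : gradient φ y = v := grad_eq_slope hfe
    have hXy : X y = y + t • v := by rw [hX]; simp [hgrad]
    have hat := hattain y hy
    have h1 := (hsub x y).mp hx (X y)
    have hyoung := young x y (subset_closure hyΩ)
    have e1 : ⟪y, X y - x⟫ = ⟪X y, y⟫ - ⟪x, y⟫ := by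
      rw [inner_sub_right, real_inner_comm y (X y), real_inner_comm y x]
    have hrx : r x = ⟪x, y⟫ - (‖y‖ ^ 2 / 2 + t * φ y) := by linarith
    have hmax : ∀ z ∈ closure Ω, ⟪x, z⟫ - (‖z‖ ^ 2 / 2 + t * φ z) ≤
        ⟪x, y⟫ - (‖y‖ ^ 2 / 2 + t * φ y) := by
      intro z hz
      rw [← hrx]
      exact young x z hz
    rw [hXy]
    exact first_order hΩopen ht hfe hyΩ hmax
  -- K3 : subdifferential lands in the closure
  have K3 : ∀ x y, y ∈ subdiff (legendre (psit Ω φ t)) x → y ∈ closure Ω := by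
    intro x y hy
    by_contra hyc
    obtain ⟨L, u, hLy, hLb⟩ :=
      geometric_hahn_banach_point_closed hΩconv.closure isClosed_closure hyc
    set u0 : EuclideanSpace ℝ (Fin d) :=
      -(InnerProductSpace.toDual ℝ _).symm L with hu0
    have hinner : ∀ z, ⟪u0, z⟫ = -L z := by
      intro z
      rw [hu0, inner_neg_left, InnerProductSpace.toDual_symm_apply]
    have hub : ∀ z ∈ closure Ω, ⟪u0, z⟫ ≤ -u := by
      intro z hz
      have := hLb z hz
      rw [hinner z]
      linarith
    have hy0 : -u < ⟪u0, y⟫ := by rw [hinner y]; linarith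
    have hbd : r (x + u0) ≤ r x + -u := by
      refine rle _ _ fun z hz => ?_
      have h1 := young x z hz
      have h2 := hub z hz
      have h3 : ⟪x + u0, z⟫ = ⟪x, z⟫ + ⟪u0, z⟫ := inner_add_left _ _ _
      linarith
    have h4 := (hsub x y).mp hy (x + u0)
    have h5 : x + u0 - x = u0 := by abel
    rw [h5] at h4
    have h6 : ⟪y, u0⟫ = ⟪u0, y⟫ := real_inner_comm _ _
    linarith
  -- injectivity of X on A
  have hinj : ∀ y₁ ∈ A, ∀ y₂ ∈ A, X y₁ = X y₂ → y₁ = y₂ := by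
    intro y1 h1 y2 h2 hXeq
    obtain ⟨h1Ω, v1, c1, hfe1⟩ := hAdata y1 h1
    obtain ⟨h2Ω, v2, c2, hfe2⟩ := hAdata y2 h2
    have g1 : gradient φ y1 = v1 := grad_eq_slope hfe1
    have g2 : gradient φ y2 = v2 := grad_eq_slope hfe2
    have s1 := local_slope_subgrad hφconv hfe1 (subset_closure h1Ω) (subset_closure h2Ω)
    have s2 := local_slope_subgrad hφconv hfe2 (subset_closure h2Ω) (subset_closure h1Ω)
    have he : y1 + t • v1 = y2 + t • v2 := by
      rw [hX] at hXeq
      simpa [g1, g2] using hXeq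
    have hv : y1 - y2 = t • (v2 - v1) := by
      rw [smul_sub, sub_eq_sub_iff_add_eq_add, he]
      abel
    have hip : ⟪y1 - y2, y1 - y2⟫ = t * (⟪v2, y1 - y2⟫ - ⟪v1, y1 - y2⟫) := by
      nth_rewrite 1 [hv]
      rw [real_inner_smul_left, inner_sub_left]
    have e2 : ⟪v1, y1 - y2⟫ = -⟪v1, y2 - y1⟫ := by
      rw [← inner_neg_right]
      congr 1
      abel
    have e3 : ⟪v2, y2 - y1⟫ = -⟪v2, y1 - y2⟫ := by
      rw [← inner_neg_right]
      congr 1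
      abel
    rw [e2] at hip
    have hsum : ⟪v2, y1 - y2⟫ + ⟪v1, y2 - y1⟫ ≤ 0 := by linarith
    have hts : t * (⟪v2, y1 - y2⟫ + ⟪v1, y2 - y1⟫) ≤ t * 0 :=
      mul_le_mul_of_nonneg_left hsum ht.le
    have hns : ⟪y1 - y2, y1 - y2⟫ ≤ 0 := by rw [hip]; nlinarith
    have := real_inner_self_nonpos.mp hns
    exact sub_eq_zero.mp this
  -- A is open, X is measurable
  have hAopen : IsOpen A := by
    rw [hA, isOpen_iff_mem_nhds]
    rintro x ⟨hxΩ, v, h, hfe⟩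
    have h2 : ∀ᶠ y in nhds x, ∀ᶠ z in nhds y, φ z = ⟪v, z⟫ + h :=
      eventually_eventually_nhds.mpr hfe
    filter_upwards [hΩopen.eventually_mem hxΩ, h2] with y hyΩ hy
    exact ⟨hyΩ, v, h, hy⟩
  have hXmeas : Measurable X := by
    have hg : Measurable fun x => gradient φ x :=
      ((InnerProductSpace.toDual ℝ _).symm.continuous.measurable).comp
        (measurable_fderiv ℝ φ)
    exact measurable_id.add (hg.const_smul t)
  set S : Set (EuclideanSpace ℝ (Fin d)) := A ∩ X ⁻¹' B with hS
  have hSmeas : MeasurableSet S := (hAopen.measurableSet).inter (hXmeas hB)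
  have hSsub : S ⊆ A := inter_subset_left
  -- measure preservation of X on subsets of A
  have hpres : volume (X '' S) = volume S := by
    rcases A.eq_empty_or_nonempty with hAe | hAne
    · have hSe : S = ∅ := by rw [hS, hAe, empty_inter]
      simp [hSe]
    have hcov : ∀ a : A, ∃ (v : EuclideanSpace ℝ (Fin d)) (ε : ℝ), 0 < ε ∧
        ∀ w ∈ Metric.ball (a : EuclideanSpace ℝ (Fin d)) ε, gradient φ w = v := by
      rintro ⟨a, ha⟩
      obtain ⟨haΩ, v, h, hfe⟩ := hAdata a ha
      obtain ⟨ε, hε, hball⟩ := Metric.eventually_nhds_iff.mp hfe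
      refine ⟨v, ε, hε, fun w hw => ?_⟩
      have hfw : ∀ᶠ u in nhds w, φ u = ⟪v, u⟫ + h := by
        filter_upwards [(Metric.isOpen_ball).mem_nhds hw] with u hu
        exact hball hu
      exact grad_eq_slope hfw
    choose vv εε hεε hvball using hcov
    set U : A → Set (EuclideanSpace ℝ (Fin d)) :=
      fun a => Metric.ball (a : EuclideanSpace ℝ (Fin d)) (εε a) with hU
    obtain ⟨T, hTc, hTU⟩ :=
      TopologicalSpace.isOpen_iUnion_countable U (fun a => Metric.isOpen_ball)
    have hAcov : A ⊆ ⋃ a ∈ T, U a := by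
      rw [hTU]
      intro a ha
      exact mem_iUnion.mpr ⟨⟨a, ha⟩, Metric.mem_ball_self (hεε _)⟩
    have hTne : T.Nonempty := by
      obtain ⟨a, ha⟩ := hAne
      obtain ⟨i, hiT, -⟩ := mem_iUnion₂.mp (hAcov ha)
      exact ⟨i, hiT⟩
    obtain ⟨u, hu⟩ := hTc.exists_eq_range hTne
    set V : ℕ → Set (EuclideanSpace ℝ (Fin d)) := fun n => U (u n) with hV
    set c : ℕ → EuclideanSpace ℝ (Fin d) := fun n => t • vv (u n) with hc
    have hVX : ∀ n, ∀ w ∈ V n, X w = w + c n := by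
      intro n w hw
      rw [hX]
      simp only [hc]
      rw [hvball (u n) w hw]
    have hSV : S ⊆ ⋃ n, V n := by
      intro a haS
      obtain ⟨i, hiT, hai⟩ := mem_iUnion₂.mp (hAcov (hSsub haS))
      have : i ∈ range u := by rw [← hu]; exact hiT
      obtain ⟨n, rfl⟩ := this
      exact mem_iUnion.mpr ⟨n, hai⟩
    set C : ℕ → Set (EuclideanSpace ℝ (Fin d)) := disjointed V with hC
    have hCmeas : ∀ n, MeasurableSet (C n) :=
      MeasurableSet.disjointed (fun n => (Metric.isOpen_ball).measurableSet)
    have hSdecomp : S = ⋃ n, S ∩ C n := by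
      rw [← inter_iUnion, hC, iUnion_disjointed]
      exact (inter_eq_left.mpr hSV).symm
    have himage : ∀ n, X '' (S ∩ C n) = (fun z => z + c n) '' (S ∩ C n) :=
      fun n => image_congr fun z hz => hVX n z (disjointed_subset V n hz.2)
    have hmeasim : ∀ n, MeasurableSet ((fun z => z + c n) '' (S ∩ C n)) := by
      intro n
      rw [Set.image_add_right]
      exact (measurable_add_const (-c n)) (hSmeas.inter (hCmeas n))
    have hvol : ∀ n, volume ((fun z => z + c n) '' (S ∩ C n)) = volume (S ∩ C n) := by
      intro n
      rw [Set.image_add_right, measure_preimage_add_right]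
    have hXdecomp : X '' S = ⋃ n, X '' (S ∩ C n) := by
      rw [← image_iUnion, ← hSdecomp]
    have hdisjC : Pairwise (Function.onFun Disjoint fun n => S ∩ C n) := by
      intro m n hmn
      exact ((disjoint_disjointed V) hmn).mono inter_subset_right inter_subset_right
    have hdisjX : Pairwise (Function.onFun Disjoint fun n => X '' (S ∩ C n)) := by
      intro m n hmn
      rw [Function.onFun, Set.disjoint_left]
      rintro x ⟨z1, hz1, rfl⟩ ⟨z2, hz2, hz⟩
      have hzz : z2 = z1 := hinj z2 (hSsub hz2.1) z1 (hSsub hz1.1) hz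
      rw [hzz] at hz2
      exact Set.disjoint_left.mp ((disjoint_disjointed V) hmn) hz1.2 hz2.2
    calc volume (X '' S) = ∑' n, volume (X '' (S ∩ C n)) := by
          rw [hXdecomp]
          exact measure_iUnion hdisjX (fun n => by rw [himage n]; exact hmeasim n)
      _ = ∑' n, volume (S ∩ C n) := tsum_congr fun n => by rw [himage n, hvol n]
      _ = volume (⋃ n, S ∩ C n) :=
          (measure_iUnion hdisjC fun n => hSmeas.inter (hCmeas n)).symm
      _ = volume S := by rw [← hSdecomp]
  -- identification of the two sides
  have hD : volume (⋃ x ∈ B, subdiff (legendre (psit Ω φ t)) x) = volume S := by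
    have hnull : volume ((closure Ω \ Ω) ∪ (Ω \ A)) = 0 := by
      refine measure_union_null ?_ hfull
      have hfr : closure Ω \ Ω = frontier Ω := (hΩopen.frontier_eq).symm
      rw [hfr]
      exact Convex.addHaar_frontier volume hΩconv
    refine le_antisymm ?_ ?_
    · have hDsub : (⋃ x ∈ B, subdiff (legendre (psit Ω φ t)) x) ⊆
          S ∪ ((closure Ω \ Ω) ∪ (Ω \ A)) := by
        intro y hy
        simp only [mem_iUnion] at hy
        obtain ⟨x, hxB, hyx⟩ := hy
        have hycl := K3 x y hyx
        by_cases hyA : y ∈ A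
        · left
          refine ⟨hyA, ?_⟩
          show X y ∈ B
          rw [← K2 y hyA x hyx]
          exact hxB
        · right
          by_cases hyΩ : y ∈ Ω
          · right; exact ⟨hyΩ, hyA⟩
          · left; exact ⟨hycl, hyΩ⟩
      calc volume (⋃ x ∈ B, subdiff (legendre (psit Ω φ t)) x)
          ≤ volume (S ∪ ((closure Ω \ Ω) ∪ (Ω \ A))) := measure_mono hDsub
        _ ≤ volume S + volume ((closure Ω \ Ω) ∪ (Ω \ A)) := measure_union_le _ _
        _ = volume S := by rw [hnull, add_zero]
    · refine measure_mono fun y hy => ?_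
      obtain ⟨hyA, hyB⟩ := hy
      simp only [mem_iUnion]
      exact ⟨X y, hyB, K1 y hyA⟩
  have himg : (X '' A) ∩ B = X '' S := by
    ext x
    constructor
    · rintro ⟨⟨z, hzA, rfl⟩, hxB⟩
      exact ⟨z, ⟨hzA, hxB⟩, rfl⟩
    · rintro ⟨z, ⟨hzA, hzB⟩, rfl⟩
      exact ⟨⟨z, hzA, rfl⟩, hzB⟩
  rw [hD, himg, hpres]
end

section
/- Let Ω ⊆ ℝ^d be a bounded convex open set, and let {B_i} be a countable collection of pairwise disjoint open balls B_i = B(x_i, r_i) ⊆ Ω whose union has full Lebesgue measure in Ω (a full packing). Then the function φ(x) = sup_i ( x_i·x + ½(r_i² − |x_i|²) ) is convex on Ω, is locally affine a.e. with the set where it is locally affine having components exactly the balls B_i, and ∇φ = x_i on B_i. -/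
open Set Metric RealInnerProductSpace

/-- Given a full packing `{Bᵢ}` of a bounded convex open set
`Ω ⊆ ℝ^d` by pairwise disjoint open balls `Bᵢ = B(xᵢ, rᵢ)` of full total
measure, the function `φ(z) = supᵢ (xᵢ·z + ½(rᵢ² − |xᵢ|²))` is convex on `Ω`,
the set where `φ` is locally affine is exactly `⋃ᵢ Bᵢ`, its connected
components are exactly the balls `Bᵢ`, and `∇φ = xᵢ` on `Bᵢ`. -/
theorem stmt14 {d : ℕ} {Ω : Set (EuclideanSpace ℝ (Fin d))}
    (hΩopen : IsOpen Ω) (hΩconv : Convex ℝ Ω) (hΩbdd : Bornology.IsBounded Ω)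
    (x : ℕ → EuclideanSpace ℝ (Fin d)) (r : ℕ → ℝ) (hr : ∀ i, 0 < r i)
    (hsub : ∀ i, ball (x i) (r i) ⊆ Ω)
    (hdisj : Pairwise fun i j => Disjoint (ball (x i) (r i)) (ball (x j) (r j)))
    (hfull : MeasureTheory.volume (Ω \ ⋃ i, ball (x i) (r i)) = 0)
    (φ : EuclideanSpace ℝ (Fin d) → ℝ)
    (hφ : ∀ z, φ z = ⨆ i, (⟪x i, z⟫ + (r i ^ 2 - ‖x i‖ ^ 2) / 2)) :
    ConvexOn ℝ Ω φ ∧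
      {z ∈ Ω | ∃ (v : EuclideanSpace ℝ (Fin d)) (h : ℝ),
          ∀ᶠ y in nhds z, φ y = ⟪v, y⟫ + h} = ⋃ i, ball (x i) (r i) ∧
      (∀ i, ∀ z ∈ ball (x i) (r i),
        connectedComponentIn (⋃ j, ball (x j) (r j)) z = ball (x i) (r i)) ∧
      (∀ i, ∀ z ∈ ball (x i) (r i), HasGradientAt φ (x i) z) := by
  classical
  -- dimension zero is impossible (two disjoint nonempty balls in a singleton space)
  rcases Nat.eq_zero_or_pos d with hd | hd
  · exfalso
    subst hd
    have hx01 : x 0 = x 1 := by ext i; exact i.elim0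
    have h1 : x 0 ∈ ball (x 1) (r 1) := by rw [hx01]; exact mem_ball_self (hr 1)
    exact Set.disjoint_left.mp (hdisj (show (0:ℕ) ≠ 1 by norm_num))
      (mem_ball_self (hr 0)) h1
  -- bounding constant
  obtain ⟨C0, hC0⟩ := hΩbdd.subset_closedBall 0
  set C : ℝ := max C0 0 + 1 with hCdef
  have hCpos : 0 < C := by positivity
  have hΩC : ∀ z ∈ Ω, ‖z‖ < C := by
    intro z hz
    have h1 : dist z 0 ≤ C0 := hC0 hz
    rw [dist_zero_right] at h1
    have : C0 ≤ max C0 0 := le_max_left _ _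
    linarith
  have hxC : ∀ i, ‖x i‖ < C := fun i => hΩC _ (hsub i (mem_ball_self (hr i)))
  -- unit vector and radius bound
  obtain ⟨u, hu⟩ : ∃ u : EuclideanSpace ℝ (Fin d), ‖u‖ = 1 :=
    ⟨EuclideanSpace.single (⟨0, hd⟩ : Fin d) (1:ℝ), by
      rw [EuclideanSpace.norm_single]; simp⟩
  have hrC : ∀ i, r i ≤ 2 * C := by
    intro i
    by_contra hlt
    push_neg at hlt
    have hmem : x i + (2*C) • u ∈ ball (x i) (r i) := by
      rw [mem_ball, dist_eq_norm]
      have : x i + (2*C) • u - x i = (2*C) • u := by abel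
      rw [this, norm_smul, hu]
      simp only [mul_one, Real.norm_eq_abs]
      rw [abs_of_pos (by positivity)]
      exact hlt
    have h2 := hΩC _ (hsub i hmem)
    have h3 : ‖(2*C) • u‖ ≤ ‖x i + (2*C) • u‖ + ‖x i‖ := by
      have h5 := norm_sub_le (x i + (2*C) • u) (x i)
      have h4 : x i + (2*C) • u - x i = (2*C) • u := by abel
      rw [h4] at h5
      exact h5
    rw [norm_smul, hu] at h3
    simp only [mul_one, Real.norm_eq_abs] at h3
    rw [abs_of_pos (by positivity)] at h3
    have := hxC i
    linarith
  -- the affine pieces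
  let F : ℕ → EuclideanSpace ℝ (Fin d) → ℝ :=
    fun i z => ⟪x i, z⟫ + (r i ^ 2 - ‖x i‖ ^ 2) / 2
  have hφF : ∀ z, φ z = ⨆ i, F i z := hφ
  have key : ∀ i z, F i z = (‖z‖ ^ 2 + r i ^ 2 - ‖z - x i‖ ^ 2) / 2 := by
    intro i z
    have h := norm_sub_sq_real z (x i)
    have h2 : ⟪x i, z⟫ = ⟪z, x i⟫ := real_inner_comm _ _
    show ⟪x i, z⟫ + (r i ^ 2 - ‖x i‖ ^ 2) / 2 = _
    rw [h2]
    linarith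
  have hFle : ∀ i z, F i z ≤ C * ‖z‖ + 2 * C ^ 2 := by
    intro i z
    have h1 := real_inner_le_norm (x i) z
    have h2 := hxC i
    have h3 := hrC i
    have h4 := norm_nonneg z
    have h5 := norm_nonneg (x i)
    have h6 := (hr i).le
    show ⟪x i, z⟫ + (r i ^ 2 - ‖x i‖ ^ 2) / 2 ≤ _
    nlinarith
  have hbdd : ∀ z, BddAbove (Set.range fun i => F i z) := by
    intro z
    refine ⟨C * ‖z‖ + 2 * C ^ 2, ?_⟩
    rintro _ ⟨i, rfl⟩
    exact hFle i z
  have hFmax : ∀ i z, z ∈ ball (x i) (r i) → ∀ j, F j z ≤ F i z := by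
    intro i z hz j
    rcases eq_or_ne j i with rfl | hji
    · exact le_refl _
    · have hzj : z ∉ ball (x j) (r j) := fun h =>
        Set.disjoint_left.mp (hdisj hji) h hz
      have h1 : r j ≤ ‖z - x j‖ := by
        rw [mem_ball, dist_eq_norm, not_lt] at hzj
        exact hzj
      have h2 : ‖z - x i‖ < r i := by rwa [mem_ball, dist_eq_norm] at hz
      rw [key, key]
      have h3 := (hr j).le
      have h4 := (hr i).le
      have h5 := norm_nonneg (z - x i)
      nlinarith
  have hφeq : ∀ i, ∀ z ∈ ball (x i) (r i), φ z = F i z := by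
    intro i z hz
    rw [hφF]
    exact le_antisymm (ciSup_le (hFmax i z hz)) (le_ciSup (hbdd z) i)
  have hstrict : ∀ i j z, z ∈ ball (x j) (r j) → r i ≤ ‖z - x i‖ → F i z < F j z := by
    intro i j z hz hge
    have h2 : ‖z - x j‖ < r j := by rwa [mem_ball, dist_eq_norm] at hz
    rw [key, key]
    have h3 := (hr i).le
    have h4 := (hr j).le
    have h5 := norm_nonneg (z - x j)
    have h6 := norm_nonneg (z - x i)
    nlinarith
  have hdense : ∀ U : Set (EuclideanSpace ℝ (Fin d)), IsOpen U → U ⊆ Ω → U.Nonempty →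
      ∃ w ∈ U, ∃ j, w ∈ ball (x j) (r j) := by
    intro U hUo hUΩ hUne
    by_contra hcon
    push_neg at hcon
    have hUsub : U ⊆ Ω \ ⋃ i, ball (x i) (r i) := by
      intro w hw
      refine ⟨hUΩ hw, ?_⟩
      simp only [Set.mem_iUnion, not_exists]
      exact hcon w hw
    have h0 := MeasureTheory.measure_mono_null hUsub hfull
    exact absurd h0 (hUo.measure_pos MeasureTheory.volume hUne).ne'
  have hloc : ∀ i, ∀ z ∈ ball (x i) (r i), ∀ᶠ y in nhds z, φ y = F i y := by
    intro i z hz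
    filter_upwards [isOpen_ball.mem_nhds hz] with y hy using hφeq i y hy
  refine ⟨?_, ?_, ?_, ?_⟩
  · -- convexity
    refine ⟨hΩconv, ?_⟩
    intro z1 hz1 z2 hz2 a b ha hb hab
    simp only [smul_eq_mul]
    rw [hφF, hφF, hφF]
    refine ciSup_le fun i => ?_
    have haff : F i (a • z1 + b • z2) = a * F i z1 + b * F i z2 := by
      show ⟪x i, a • z1 + b • z2⟫ + (r i ^ 2 - ‖x i‖ ^ 2) / 2
          = a * (⟪x i, z1⟫ + (r i ^ 2 - ‖x i‖ ^ 2) / 2)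
          + b * (⟪x i, z2⟫ + (r i ^ 2 - ‖x i‖ ^ 2) / 2)
      rw [inner_add_right, real_inner_smul_right, real_inner_smul_right]
      have hb' : b = 1 - a := by linarith
      subst hb'
      ring
    rw [haff]
    exact add_le_add (mul_le_mul_of_nonneg_left (le_ciSup (hbdd z1) i) ha)
      (mul_le_mul_of_nonneg_left (le_ciSup (hbdd z2) i) hb)
  · -- locally affine set = union of balls
    ext z
    simp only [Set.mem_setOf_eq, Set.mem_iUnion]
    constructor
    · rintro ⟨hzΩ, v, h, hev⟩
      by_contra hznot
      push_neg at hznot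
      obtain ⟨ε, hε, hball⟩ : ∃ ε > 0, ball z ε ⊆ Ω ∩ {y | φ y = ⟪v, y⟫ + h} := by
        rcases Metric.mem_nhds_iff.mp (Filter.inter_mem (hΩopen.mem_nhds hzΩ) hev)
          with ⟨ε, hε, hsub'⟩
        exact ⟨ε, hε, hsub'⟩
      obtain ⟨w0, hw0ball, i, hw0i⟩ := hdense (ball z ε) isOpen_ball
        (fun y hy => (hball hy).1) ⟨z, mem_ball_self hε⟩
      obtain ⟨δ, hδ, hδsub⟩ : ∃ δ > 0, ball w0 δ ⊆ ball z ε ∩ ball (x i) (r i) := by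
        rcases Metric.isOpen_iff.mp (isOpen_ball.inter isOpen_ball) w0 ⟨hw0ball, hw0i⟩
          with ⟨δ, hδ, hδs⟩
        exact ⟨δ, hδ, hδs⟩
      have haffeq : ∀ y ∈ ball w0 δ, ⟪v, y⟫ + h = F i y := fun y hy =>
        ((hball (hδsub hy).1).2).symm.trans (hφeq i y (hδsub hy).2)
      have hvi : v = x i := by
        by_contra hne
        set w := v - x i with hw
        have hwne : w ≠ 0 := sub_ne_zero.mpr hne
        have hwpos : 0 < ‖w‖ := norm_pos_iff.mpr hwne
        set t : ℝ := δ / (2 * (‖w‖ + 1)) with ht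
        have htpos : 0 < t := by positivity
        have hyin : w0 + t • w ∈ ball w0 δ := by
          rw [mem_ball, dist_eq_norm]
          have h1 : w0 + t • w - w0 = t • w := by abel
          rw [h1, norm_smul, Real.norm_eq_abs, abs_of_pos htpos]
          rw [ht]
          rw [div_mul_eq_mul_div]
          rw [div_lt_iff₀ (by positivity)]
          nlinarith
        have e1 := haffeq _ hyin
        have e2 := haffeq w0 (mem_ball_self hδ)
        have e1' : ⟪v, w0⟫ + t * ⟪v, w⟫ + h
            = ⟪x i, w0⟫ + t * ⟪x i, w⟫ + (r i ^ 2 - ‖x i‖ ^ 2) / 2 := by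
          have : F i (w0 + t • w) = ⟪x i, w0⟫ + t * ⟪x i, w⟫ + (r i ^ 2 - ‖x i‖ ^ 2) / 2 := by
            show ⟪x i, w0 + t • w⟫ + (r i ^ 2 - ‖x i‖ ^ 2) / 2 = _
            rw [inner_add_right, real_inner_smul_right]
          rw [inner_add_right, real_inner_smul_right] at e1
          rw [this] at e1
          linarith
        have e2' : ⟪v, w0⟫ + h = ⟪x i, w0⟫ + (r i ^ 2 - ‖x i‖ ^ 2) / 2 := e2
        have e3 : ⟪v, w⟫ = ⟪x i, w⟫ := by
          have h4 : t * ⟪v, w⟫ = t * ⟪x i, w⟫ := by linarith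
          exact mul_left_cancel₀ htpos.ne' h4
        have e5 : ⟪w, w⟫ = (0:ℝ) := by
          have hsl : ⟪v - x i, w⟫ = (0:ℝ) := by
            rw [inner_sub_left]; linarith
          rwa [← hw] at hsl
        exact hwne (inner_self_eq_zero.mp e5)
      have hch : h = (r i ^ 2 - ‖x i‖ ^ 2) / 2 := by
        have e2 := haffeq w0 (mem_ball_self hδ)
        rw [hvi] at e2
        have : F i w0 = ⟪x i, w0⟫ + (r i ^ 2 - ‖x i‖ ^ 2) / 2 := rfl
        rw [this] at e2
        linarith
      have hφFi : ∀ y ∈ ball z ε, φ y = F i y := by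
        intro y hy
        rw [(hball hy).2, hvi, hch]
      have hznoti : r i ≤ ‖z - x i‖ := by
        have := hznot i
        rw [mem_ball, dist_eq_norm, not_lt] at this
        exact this
      have hnpos : 0 < ‖z - x i‖ := lt_of_lt_of_le (hr i) hznoti
      set s : ℝ := ε / (2 * ‖z - x i‖) with hs
      have hspos : 0 < s := by positivity
      set y0 := z + s • (z - x i) with hy0
      have hy0ball : y0 ∈ ball z ε := by
        rw [mem_ball, dist_eq_norm, hy0]
        have h1 : z + s • (z - x i) - z = s • (z - x i) := by abel
        rw [h1, norm_smul, Real.norm_eq_abs, abs_of_pos hspos, hs]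
        have hne : ‖z - x i‖ ≠ 0 := hnpos.ne'
        have heq : ε / (2 * ‖z - x i‖) * ‖z - x i‖ = ε / 2 := by
          field_simp
        rw [heq]
        linarith
      have hy0out : r i < ‖y0 - x i‖ := by
        have h1 : y0 - x i = (1 + s) • (z - x i) := by
          rw [hy0, add_smul, one_smul]; abel
        rw [h1, norm_smul, Real.norm_eq_abs, abs_of_pos (by linarith)]
        nlinarith
      have hU'open : IsOpen (ball z ε ∩ (closedBall (x i) (r i))ᶜ) :=
        isOpen_ball.inter isClosed_closedBall.isOpen_compl
      have hy0U' : y0 ∈ ball z ε ∩ (closedBall (x i) (r i))ᶜ := by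
        refine ⟨hy0ball, ?_⟩
        simp only [Set.mem_compl_iff, mem_closedBall, dist_eq_norm, not_le]
        exact hy0out
      obtain ⟨w1, hw1U', j, hw1j⟩ := hdense _ hU'open
        (fun y hy => (hball hy.1).1) ⟨y0, hy0U'⟩
      have hw1out : r i ≤ ‖w1 - x i‖ := by
        have := hw1U'.2
        simp only [Set.mem_compl_iff, mem_closedBall, dist_eq_norm, not_le] at this
        exact this.le
      have hlt := hstrict i j w1 hw1j hw1out
      have heq1 : φ w1 = F i w1 := hφFi w1 hw1U'.1
      have heq2 : φ w1 = F j w1 := hφeq j w1 hw1j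
      linarith
    · rintro ⟨i, hzi⟩
      exact ⟨hsub i hzi, x i, (r i ^ 2 - ‖x i‖ ^ 2) / 2, hloc i z hzi⟩
  · -- connected components
    intro i z hz
    apply Set.Subset.antisymm
    · have hVopen : IsOpen (⋃ j ∈ {j : ℕ | j ≠ i}, ball (x j) (r j)) :=
        isOpen_biUnion fun _ _ => isOpen_ball
      have hdisj2 : Disjoint (ball (x i) (r i)) (⋃ j ∈ {j : ℕ | j ≠ i}, ball (x j) (r j)) := by
        rw [Set.disjoint_iUnion₂_right]
        intro j hji
        exact (hdisj (Ne.symm hji))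
      have hUsub : (⋃ j, ball (x j) (r j))
          ⊆ ball (x i) (r i) ∪ ⋃ j ∈ {j : ℕ | j ≠ i}, ball (x j) (r j) := by
        intro w hw
        rcases Set.mem_iUnion.mp hw with ⟨j, hj⟩
        rcases eq_or_ne j i with rfl | hji
        · exact Or.inl hj
        · exact Or.inr (Set.mem_biUnion hji hj)
      exact isPreconnected_connectedComponentIn.subset_left_of_subset_union isOpen_ball
        hVopen hdisj2 ((connectedComponentIn_subset _ _).trans hUsub)
        ⟨z, mem_connectedComponentIn (Set.mem_iUnion.mpr ⟨i, hz⟩), hz⟩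
    · exact (convex_ball (x i) (r i)).isPreconnected.subset_connectedComponentIn hz
        (fun w hw => Set.mem_iUnion.mpr ⟨i, hw⟩)
  · -- gradient
    intro i z hz
    rw [hasGradientAt_iff_hasFDerivAt]
    have h1 : HasFDerivAt (F i) (innerSL ℝ (x i)) z :=
      ((innerSL ℝ (x i)).hasFDerivAt).add_const _
    have h2 : (InnerProductSpace.toDual ℝ (EuclideanSpace ℝ (Fin d)) (x i)
        : EuclideanSpace ℝ (Fin d) →L[ℝ] ℝ) = innerSL ℝ (x i) :=
      ContinuousLinearMap.ext fun y => InnerProductSpace.toDual_apply_apply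
    rw [h2]
    exact h1.congr_of_eventuallyEq (hloc i z hz)
end

section
/- Let Ω ⊆ ℝ^d be a bounded open convex set contained in the unit ball with 0 ∈ U ⊆ Ω, U open convex, and Φ(x) = dist(x, U). Let {σ_i} be a dense sequence of unit vectors in S^{d−1} and x_i ∈ ∂U a maximizer of σ_i·x over cl(U). Then Φ(x) = max(0, sup_i σ_i·(x − x_i)) for all x ∈ Ω. -/
open Set Metric RealInnerProductSpace

/-- Let `Ω ⊆ ℝ^d` be bounded open convex, contained in the
unit ball, and `U ⊆ Ω` open convex with `0 ∈ U`; let `Φ(x) = dist(x, U)`.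
For a dense sequence of unit vectors `σᵢ` and maximizers `xᵢ ∈ ∂U` of
`σᵢ·x` over `cl(U)`, one has `Φ(x) = max(0, supᵢ σᵢ·(x − xᵢ))` on `Ω`. -/
theorem stmt15 {d : ℕ} {Ω U : Set (EuclideanSpace ℝ (Fin d))}
    (hΩopen : IsOpen Ω) (hΩconv : Convex ℝ Ω) (hΩsub : Ω ⊆ ball 0 1)
    (hUopen : IsOpen U) (hUconv : Convex ℝ U) (hU0 : (0 : EuclideanSpace ℝ (Fin d)) ∈ U)
    (hUΩ : U ⊆ Ω)
    (σ : ℕ → EuclideanSpace ℝ (Fin d)) (hσ : ∀ i, ‖σ i‖ = 1)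
    (hσdense : sphere (0 : EuclideanSpace ℝ (Fin d)) 1 ⊆ closure (range σ))
    (x : ℕ → EuclideanSpace ℝ (Fin d)) (hx : ∀ i, x i ∈ frontier U)
    (hmax : ∀ i, ∀ y ∈ closure U, ⟪σ i, y⟫ ≤ ⟪σ i, x i⟫) :
    ∀ z ∈ Ω, infDist z U = max 0 (⨆ i, ⟪σ i, z - x i⟫) := by
  intro z hz
  have hUne : U.Nonempty := ⟨0, hU0⟩
  -- bounds on points
  have hzn : ‖z‖ < 1 := by simpa using hΩsub hz
  have hxi : ∀ i, ‖x i‖ ≤ 1 := by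
    intro i
    have h1 : x i ∈ closure U := (hx i).1
    have h2 : closure U ⊆ closure (ball (0 : EuclideanSpace ℝ (Fin d)) 1) :=
      closure_mono (fun y hy => hΩsub (hUΩ hy))
    have := h2 h1
    rw [closure_ball (0 : EuclideanSpace ℝ (Fin d)) one_ne_zero] at this
    simpa using this
  have hbd : ∀ i, ‖z - x i‖ ≤ 2 := by
    intro i
    calc ‖z - x i‖ ≤ ‖z‖ + ‖x i‖ := norm_sub_le _ _
    _ ≤ 1 + 1 := add_le_add hzn.le (hxi i)
    _ = 2 := by norm_num
  have hBdd : BddAbove (range fun i => ⟪σ i, z - x i⟫) := by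
    refine ⟨2, fun r hr => ?_⟩
    obtain ⟨i, rfl⟩ := hr
    calc ⟪σ i, z - x i⟫ ≤ ‖σ i‖ * ‖z - x i‖ := real_inner_le_norm _ _
    _ ≤ 1 * 2 := by rw [hσ i]; simpa using hbd i
    _ = 2 := by norm_num
  -- upper bound for sup
  have hsup_le : (⨆ i, ⟪σ i, z - x i⟫) ≤ infDist z U := by
    refine ciSup_le fun i => le_of_not_gt fun hlt => ?_
    obtain ⟨y, hy, hdy⟩ := (infDist_lt_iff hUne).mp hlt
    refine absurd hdy (not_lt.mpr ?_)
    have h1 : ⟪σ i, y⟫ ≤ ⟪σ i, x i⟫ := hmax i y (subset_closure hy)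
    have h2 : ⟪σ i, z - x i⟫ ≤ ⟪σ i, z - y⟫ := by
      rw [inner_sub_right, inner_sub_right]; linarith
    calc ⟪σ i, z - x i⟫ ≤ ⟪σ i, z - y⟫ := h2
    _ ≤ ‖σ i‖ * ‖z - y‖ := real_inner_le_norm _ _
    _ = dist z y := by rw [hσ i, one_mul, dist_eq_norm]
  have hge : max 0 (⨆ i, ⟪σ i, z - x i⟫) ≤ infDist z U :=
    max_le infDist_nonneg hsup_le
  -- lower bound
  have hle : infDist z U ≤ max 0 (⨆ i, ⟪σ i, z - x i⟫) := by
    by_cases hzc : z ∈ closure U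
    · rw [infDist_zero_of_mem_closure hzc]
      exact le_max_left _ _
    · -- projection
      have hKcl : IsClosed (closure U) := isClosed_closure
      have hKne : (closure U).Nonempty := hUne.closure
      obtain ⟨p, hpK, hpd⟩ := hKcl.exists_infDist_eq_dist hKne z
      have hDU : infDist z U = dist z p := by rw [← infDist_closure]; exact hpd
      have hzp : z - p ≠ 0 := by
        intro h
        have : z = p := by rwa [sub_eq_zero] at h
        exact hzc (this ▸ hpK)
      set D : ℝ := ‖z - p‖ with hD
      have hDpos : 0 < D := norm_pos_iff.mpr hzp
      have hdzp : dist z p = D := by rw [dist_eq_norm]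
      -- projection inequality
      have hproj : ∀ w ∈ closure U, ⟪z - p, w - p⟫ ≤ 0 := by
        have hnorm : ‖z - p‖ = ⨅ w : closure U, ‖z - w‖ := by
          have h := hpd
          rw [infDist_eq_iInf] at h
          simp only [dist_eq_norm] at h
          exact h.symm
        exact (norm_eq_iInf_iff_real_inner_le_zero hUconv.closure hpK).mp hnorm
      set s : EuclideanSpace ℝ (Fin d) := D⁻¹ • (z - p) with hs
      have hsnorm : ‖s‖ = 1 := by
        rw [hs, norm_smul, norm_inv, Real.norm_eq_abs, abs_of_pos hDpos, ← hD,
          inv_mul_cancel₀ hDpos.ne']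
      have hsmem : s ∈ closure (range σ) := hσdense (by simpa using hsnorm)
      -- main estimate: sup ≥ D
      have hsup_ge : D ≤ ⨆ i, ⟪σ i, z - x i⟫ := by
        refine le_of_forall_pos_le_add fun ε hε => ?_
        obtain ⟨y, hy, hyd⟩ := Metric.mem_closure_iff.mp hsmem (ε / 2) (by positivity)
        obtain ⟨i, rfl⟩ := hy
        have hxiK : x i ∈ closure U := (hx i).1
        have h1 : ⟪s, z - p⟫ = D := by
          rw [hs, real_inner_smul_left, real_inner_self_eq_norm_sq, ← hD]
          field_simp
        have h2 : 0 ≤ ⟪s, p - x i⟫ := by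
          rw [hs, real_inner_smul_left]
          have := hproj (x i) hxiK
          have h3 : ⟪z - p, p - x i⟫ = -⟪z - p, x i - p⟫ := by
            rw [← inner_neg_right]; congr 1; abel
          nlinarith [inv_pos.mpr hDpos]
        have h4 : ⟪s, z - x i⟫ ≥ D := by
          have : ⟪s, z - x i⟫ = ⟪s, z - p⟫ + ⟪s, p - x i⟫ := by
            rw [← inner_add_right]; congr 1; abel
          linarith
        have h5 : ⟪σ i - s, z - x i⟫ ≥ -ε := by
          have := real_inner_le_norm (s - σ i) (z - x i)
          have habs : ⟪s - σ i, z - x i⟫ ≤ ‖s - σ i‖ * ‖z - x i‖ := this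
          have hns : ‖s - σ i‖ < ε / 2 := by rwa [dist_eq_norm] at hyd
          have hmul : ‖s - σ i‖ * ‖z - x i‖ ≤ (ε / 2) * 2 := by
            apply mul_le_mul hns.le (hbd i) (norm_nonneg _) (by positivity)
          have : ⟪σ i - s, z - x i⟫ = -⟪s - σ i, z - x i⟫ := by
            rw [← inner_neg_left]; congr 1; abel
          rw [this]
          linarith
        have h6 : D - ε ≤ ⟪σ i, z - x i⟫ := by
          have : ⟪σ i, z - x i⟫ = ⟪s, z - x i⟫ + ⟪σ i - s, z - x i⟫ := by
            rw [← inner_add_left]; congr 1; abel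
          linarith
        calc D ≤ ⟪σ i, z - x i⟫ + ε := by linarith
        _ ≤ (⨆ i, ⟪σ i, z - x i⟫) + ε := by
            gcongr; exact le_ciSup hBdd i
      calc infDist z U = D := by rw [hDU, hdzp]
      _ ≤ ⨆ i, ⟪σ i, z - x i⟫ := hsup_ge
      _ ≤ max 0 _ := le_max_right _ _
  linarith
end

section
/- Let Ω ⊆ ℝ^d be open and convex, φ : Ω → ℝ convex and differentiable, and suppose v = ∇φ is continuous. Then for every t ≥ 0 the map X_t = id + t·v is a homeomorphism from Ω onto its image X_t(Ω), its inverse is a contraction (1-Lipschitz), and X_t(Ω) is an open subset of ℝ^d. -/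
open Set InnerProductSpace RealInnerProductSpace Metric

/-- Gradient inequality for a convex function. -/
lemma stmt18_grad_ineq {d : ℕ} {Ω : Set (EuclideanSpace ℝ (Fin d))}
    {φ : EuclideanSpace ℝ (Fin d) → ℝ} (hφ : ConvexOn ℝ Ω φ)
    {g x y : EuclideanSpace ℝ (Fin d)} (hg : HasGradientAt φ g x)
    (hx : x ∈ Ω) (hy : y ∈ Ω) :
    φ x + ⟪g, y - x⟫_ℝ ≤ φ y := by
  set A : ℝ →ᵃ[ℝ] EuclideanSpace ℝ (Fin d) := AffineMap.lineMap x y with hA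
  have hf : ConvexOn ℝ (A ⁻¹' Ω) (φ ∘ A) := hφ.comp_affineMap A
  have h0 : (0 : ℝ) ∈ A ⁻¹' Ω := by simp [hA, AffineMap.lineMap_apply_module', hx]
  have h1 : (1 : ℝ) ∈ A ⁻¹' Ω := by simp [hA, AffineMap.lineMap_apply_module', hy]
  have hAd : HasDerivAt (fun s : ℝ => A s) (y - x) 0 := by
    simp only [hA, AffineMap.lineMap_apply_module']
    simpa using ((hasDerivAt_id (0:ℝ)).smul_const (y - x)).add_const x
  have hder : HasDerivAt (φ ∘ A) ⟪g, y - x⟫_ℝ 0 := by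
    have hx0 : (fun s : ℝ => A s) 0 = x := by simp [hA, AffineMap.lineMap_apply_module']
    have := (hx0 ▸ hg.hasFDerivAt : HasFDerivAt φ _ ((fun s : ℝ => A s) 0)).comp_hasDerivAt 0 hAd
    simpa [InnerProductSpace.toDual_apply_apply] using this
  have := hf.le_slope_of_hasDerivAt h0 h1 one_pos hder
  rw [slope_def_field] at this
  simp only [Function.comp, hA, AffineMap.lineMap_apply_module'] at this
  simp only [one_smul, zero_smul, zero_add, sub_zero, div_one, sub_add_cancel] at this
  linarith

/-- Let `Ω ⊆ ℝ^d` be open and convex, `φ` convex and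
differentiable on `Ω` with continuous gradient `v = ∇φ`.  For every `t ≥ 0`
the map `X_t = id + t·v` is a homeomorphism from `Ω` onto its image, with
1-Lipschitz (contraction) inverse, and `X_t(Ω)` is open in `ℝ^d`. -/
theorem stmt18 {d : ℕ} {Ω : Set (EuclideanSpace ℝ (Fin d))}
    (hΩopen : IsOpen Ω) (hΩconv : Convex ℝ Ω)
    {φ : EuclideanSpace ℝ (Fin d) → ℝ} (hφ : ConvexOn ℝ Ω φ)
    (v : EuclideanSpace ℝ (Fin d) → EuclideanSpace ℝ (Fin d))
    (hgrad : ∀ z ∈ Ω, HasGradientAt φ (v z) z) (hv : ContinuousOn v Ω)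
    {t : ℝ} (ht : 0 ≤ t) :
    IsOpen ((fun z => z + t • v z) '' Ω) ∧
      InjOn (fun z => z + t • v z) Ω ∧
      (∀ x ∈ Ω, ∀ y ∈ Ω, ‖x - y‖ ≤ ‖(x + t • v x) - (y + t • v y)‖) ∧
      ∃ F : Ω ≃ₜ ((fun z => z + t • v z) '' Ω),
        (∀ z : Ω, (F z : EuclideanSpace ℝ (Fin d)) = z + t • v z) ∧
          LipschitzWith 1 F.symm := by
  set f : EuclideanSpace ℝ (Fin d) → EuclideanSpace ℝ (Fin d) := fun z => z + t • v z with hf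
  -- monotonicity of the gradient
  have hmono : ∀ x ∈ Ω, ∀ y ∈ Ω, 0 ≤ ⟪x - y, v x - v y⟫_ℝ := by
    intro x hx y hy
    have h1 := stmt18_grad_ineq hφ (hgrad x hx) hx hy
    have h2 := stmt18_grad_ineq hφ (hgrad y hy) hy hx
    have e1 : ⟪v y, x - y⟫_ℝ = - ⟪v y, y - x⟫_ℝ := by
      rw [← inner_neg_right]; congr 1; abel
    have e2 : ⟪x - y, v x - v y⟫_ℝ = ⟪v x, x - y⟫_ℝ - ⟪v y, x - y⟫_ℝ := by
      rw [real_inner_comm, inner_sub_left]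
    have e3 : ⟪v x, y - x⟫_ℝ = - ⟪v x, x - y⟫_ℝ := by
      rw [← inner_neg_right]; congr 1; abel
    rw [e2]; rw [e3] at h1; rw [e1] at h2; linarith
  -- expansion property
  have hexp : ∀ x ∈ Ω, ∀ y ∈ Ω, ‖x - y‖ ≤ ‖(x + t • v x) - (y + t • v y)‖ := by
    intro x hx y hy
    rw [← pow_le_pow_iff_left₀ (norm_nonneg _) (norm_nonneg _) two_ne_zero]
    have hid : (x + t • v x) - (y + t • v y) = (x - y) + t • (v x - v y) := by
      rw [smul_sub]; abel
    rw [hid, norm_add_sq_real]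
    have h1 : 0 ≤ ⟪x - y, t • (v x - v y)⟫_ℝ := by
      rw [real_inner_smul_right]
      exact mul_nonneg ht (hmono x hx y hy)
    nlinarith [sq_nonneg ‖t • (v x - v y)‖, norm_nonneg (t • (v x - v y))]
  -- injectivity
  have hinj : InjOn f Ω := by
    intro x hx y hy hxy
    have := hexp x hx y hy
    rw [show (x + t • v x) - (y + t • v y) = f x - f y from rfl, hxy, sub_self, norm_zero] at this
    have : ‖x - y‖ = 0 := le_antisymm this (norm_nonneg _)
    rwa [norm_eq_zero, sub_eq_zero] at this
  -- continuity of f on Ω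
  have hfc : ContinuousOn f Ω :=
    continuousOn_id.add (hv.const_smul t)
  -- openness of the image
  have hopen : IsOpen (f '' Ω) := by
    rw [Metric.isOpen_iff]
    rintro w ⟨x0, hx0, rfl⟩
    obtain ⟨ε, hε, hball⟩ := Metric.isOpen_iff.1 hΩopen x0 hx0
    set ρ := ε / 2 with hρ
    have hρpos : 0 < ρ := by positivity
    have hcb : closedBall x0 ρ ⊆ Ω :=
      (closedBall_subset_ball (by simp [hρ]; linarith)).trans hball
    refine ⟨ρ / 2, by positivity, ?_⟩
    intro y hy
    rw [mem_ball, dist_eq_norm] at hy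
    -- minimize g z = ‖z‖²/2 + t φ z - ⟪y, z⟫ on the closed ball
    set g : EuclideanSpace ℝ (Fin d) → ℝ := fun z => ‖z‖ ^ 2 / 2 + t * φ z - ⟪y, z⟫_ℝ with hg
    have hφc : ContinuousOn φ Ω := fun z hz =>
      ((hgrad z hz).hasFDerivAt.continuousAt).continuousWithinAt
    have hgc : ContinuousOn g (closedBall x0 ρ) := by
      apply ContinuousOn.sub
      · exact ContinuousOn.add
          ((continuous_norm.pow 2).continuousOn.div_const 2)
          (continuousOn_const.mul (hφc.mono hcb))
      · exact ((innerSL ℝ y).continuous.continuousOn)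
    obtain ⟨z, hzmem, hzmin⟩ := (isCompact_closedBall x0 ρ).exists_isMinOn
      ⟨x0, mem_closedBall_self hρpos.le⟩ hgc
    have hzΩ : z ∈ Ω := hcb hzmem
    -- strong convexity estimate
    have hkey : ⟪f x0 - y, z - x0⟫_ℝ + ‖z - x0‖ ^ 2 / 2 ≤ g z - g x0 := by
      have hgi := stmt18_grad_ineq hφ (hgrad x0 hx0) hx0 hzΩ
      have hgi' : t * φ x0 + t * ⟪v x0, z - x0⟫_ℝ ≤ t * φ z := by
        nlinarith
      have hn : ‖z‖ ^ 2 = ‖x0‖ ^ 2 + 2 * ⟪x0, z - x0⟫_ℝ + ‖z - x0‖ ^ 2 := by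
        have := norm_add_sq_real x0 (z - x0)
        rwa [add_sub_cancel] at this
      have hy' : ⟪y, z⟫_ℝ - ⟪y, x0⟫_ℝ = ⟪y, z - x0⟫_ℝ := (inner_sub_right _ _ _).symm
      have hfx : ⟪f x0 - y, z - x0⟫_ℝ
          = ⟪x0, z - x0⟫_ℝ + t * ⟪v x0, z - x0⟫_ℝ - ⟪y, z - x0⟫_ℝ := by
        have hfx0 : f x0 = x0 + t • v x0 := rfl
        rw [hfx0, add_sub_right_comm, inner_add_left, inner_sub_left, real_inner_smul_left]
        ring
      simp only [hg]
      rw [hfx]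
      linarith
    have hgz : g z ≤ g x0 := hzmin (mem_closedBall_self hρpos.le)
    have hcs : - (‖f x0 - y‖ * ‖z - x0‖) ≤ ⟪f x0 - y, z - x0⟫_ℝ := by
      have h := abs_real_inner_le_norm (f x0 - y) (z - x0)
      have := neg_abs_le (⟪f x0 - y, z - x0⟫_ℝ)
      linarith
    have hnorm_fy : ‖f x0 - y‖ < ρ / 2 := by
      rw [← norm_neg]; simpa [neg_sub] using hy
    have hzball : z ∈ ball x0 ρ := by
      rw [mem_ball, dist_eq_norm]
      by_contra hcon
      push_neg at hcon
      have hs : 0 < ‖z - x0‖ := lt_of_lt_of_le hρpos hcon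
      have hq : ‖z - x0‖ ^ 2 / 2 ≤ ‖f x0 - y‖ * ‖z - x0‖ := by
        simp only [hg] at hkey hgz
        linarith
      nlinarith [hq, mul_lt_mul_of_pos_right hnorm_fy hs,
        mul_le_mul_of_nonneg_right hcon hs.le]
    -- z is a local minimum, so the gradient of g vanishes
    have hnhds : closedBall x0 ρ ∈ nhds z :=
      Filter.mem_of_superset (isOpen_ball.mem_nhds hzball) ball_subset_closedBall
    have hloc : IsLocalMin g z := hzmin.isLocalMin hnhds
    have hD : HasFDerivAt g (InnerProductSpace.toDual ℝ (EuclideanSpace ℝ (Fin d)) (z + t • v z - y)) z := by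
      have h1 : HasFDerivAt (fun w : EuclideanSpace ℝ (Fin d) => ‖w‖ ^ 2 / 2) (innerSL ℝ z) z := by
        have h0 : HasFDerivAt (fun w : EuclideanSpace ℝ (Fin d) => (2:ℝ)⁻¹ * ‖w‖ ^ 2)
            ((2:ℝ)⁻¹ • 2 • innerSL ℝ z) z := (hasStrictFDerivAt_norm_sq z).hasFDerivAt.const_mul ((2:ℝ)⁻¹)
        have e : (fun w : EuclideanSpace ℝ (Fin d) => ‖w‖ ^ 2 / 2) = fun w => (2:ℝ)⁻¹ * ‖w‖ ^ 2 := by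
          funext w; ring
        rw [e]
        refine h0.congr_fderiv ?_
        ext u
        simp only [ContinuousLinearMap.coe_smul', Pi.smul_apply, innerSL_apply_apply,
          smul_eq_mul, two_smul, ContinuousLinearMap.add_apply, ContinuousLinearMap.smul_apply]
        ring
      have h2 : HasFDerivAt (fun w => t * φ w)
          (t • (InnerProductSpace.toDual ℝ (EuclideanSpace ℝ (Fin d)) (v z))) z :=
        (hgrad z hzΩ).hasFDerivAt.const_mul t
      have h3 : HasFDerivAt (fun w : EuclideanSpace ℝ (Fin d) => ⟪y, w⟫_ℝ) (innerSL ℝ y) z :=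
        (innerSL ℝ y).hasFDerivAt
      have hsum : HasFDerivAt g (innerSL ℝ z
          + t • (InnerProductSpace.toDual ℝ (EuclideanSpace ℝ (Fin d)) (v z)) - innerSL ℝ y) z :=
        (h1.add h2).sub h3
      convert hsum using 1
      ext u
      simp only [InnerProductSpace.toDual_apply_apply, ContinuousLinearMap.sub_apply,
        ContinuousLinearMap.add_apply, ContinuousLinearMap.coe_smul', Pi.smul_apply,
        innerSL_apply_apply, smul_eq_mul, inner_sub_left, inner_add_left, real_inner_smul_left]
    have hzero := hloc.hasFDerivAt_eq_zero hD
    have : z + t • v z - y = 0 := by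
      have := congrArg (InnerProductSpace.toDual ℝ (EuclideanSpace ℝ (Fin d))).symm hzero
      simpa using this
    exact ⟨z, hzΩ, by simp [hf]; rw [← sub_eq_zero]; exact this⟩
  refine ⟨hopen, hinj, hexp, ?_⟩
  -- the homeomorphism
  set Φeq := Equiv.Set.imageOfInjOn f Ω hinj with hEq
  have hEapp : ∀ x : Ω, (Φeq x : EuclideanSpace ℝ (Fin d)) = f x := fun x => rfl
  have hlip : LipschitzWith 1 Φeq.symm := by
    apply LipschitzWith.of_dist_le_mul
    intro a b
    rw [NNReal.coe_one, one_mul, Subtype.dist_eq, Subtype.dist_eq, dist_eq_norm, dist_eq_norm]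
    have ha : f (Φeq.symm a : EuclideanSpace ℝ (Fin d)) = (a : EuclideanSpace ℝ (Fin d)) := by
      rw [← hEapp]; exact congrArg Subtype.val (Φeq.apply_symm_apply a)
    have hb : f (Φeq.symm b : EuclideanSpace ℝ (Fin d)) = (b : EuclideanSpace ℝ (Fin d)) := by
      rw [← hEapp]; exact congrArg Subtype.val (Φeq.apply_symm_apply b)
    calc ‖(Φeq.symm a : EuclideanSpace ℝ (Fin d)) - (Φeq.symm b : EuclideanSpace ℝ (Fin d))‖
        ≤ ‖f (Φeq.symm a : EuclideanSpace ℝ (Fin d)) - f (Φeq.symm b : EuclideanSpace ℝ (Fin d))‖ :=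
          hexp _ (Φeq.symm a).2 _ (Φeq.symm b).2
      _ = ‖(a : EuclideanSpace ℝ (Fin d)) - (b : EuclideanSpace ℝ (Fin d))‖ := by rw [ha, hb]
  refine ⟨⟨Φeq, ?_, hlip.continuous⟩, fun z => rfl, hlip⟩
  · exact Continuous.subtype_mk (hfc.restrict) _
end
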